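/- arXiv:2211.06645 — 7 statements merged into one kernel-verified Lean document; each statement's English description precedes it below -/
import Mathlib

section
/- Let K be an algebraically closed field of characteristic 0, g a finite-dimensional simple Lie algebra over K, and V a finite-dimensional g-module. Then a K-linear map D : g → V is a (1/2)-derivation of g with values in V if and only if D is a homomorphism of g-modules from the adjoint module g to V (i.e. D([x,y]) = x • D(y) for all x, y ∈ g). -/
/-- The space of `δ`-derivations of a Lie algebra `L` with values in an `L`-module `V`:
linear maps `D : L → V` with `D ⁅x, y⁆ = δ • (x • D y) - δ • (y • D x)`. -/
def deltaDer (K : Type*) [CommRing K] (L : Type*) [LieRing L] [LieAlgebra K L]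
    (V : Type*) [AddCommGroup V] [Module K V] [LieRingModule L V] [LieModule K L V]
    (δ : K) : Submodule K (L →ₗ[K] V) where
  carrier := {D | ∀ x y : L, D ⁅x, y⁆ = δ • ⁅x, D y⁆ - δ • ⁅y, D x⁆}
  zero_mem' := by intro x y; simp
  add_mem' := by
    intro a b ha hb x y
    simp only [LinearMap.add_apply, ha x y, hb x y, lie_add, smul_add]
    abel
  smul_mem' := by
    intro c a ha x y
    simp only [LinearMap.smul_apply, ha x y, lie_smul, smul_sub, smul_comm c δ]


/-!
Let `N = Der_{1/2}(L, V)`. It is an `L`-submodule of `L →ₗ[K] V` whose elements satisfy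
`⁅x, D⁆ y = ⁅y, D⁆ x`, and the claim is that `L` acts trivially on it.

Fix a Cartan subalgebra `H`. If `N` had a nonzero weight, order weights by a `ℚ`-linear functional
`ℓ` that is positive on it and nonzero on every root, and let `ν` be a weight of `N` maximising
`ℓ`. A root vector `z` with `ℓ α > 0` then kills the `ν`-weight space, so for `F` in it the vector
`F z` has weight both `α` and `ν + α`; hence `F z = 0` and `F ⁅y, z⁆ = ⁅y, F z⁆ = 0`. Since `H` is
spanned by the brackets `⁅L_α, L_{-α}⁆`, such `F` vanishes on `H`, and for a true weight vector `F`
the symmetry gives `ν h • F z = α h • F z` on each root space `L_α`, so `F = 0`.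

Thus `N` has only the weight `0`, every root vector acts by zero on `N`, and the kernel of the
action, an ideal containing all root spaces and hence `H`, is all of `L`.
-/

open LieModule LieAlgebra TensorProduct

section HalfDerivation

variable {K L V : Type*} [Field K] [NeZero (2 : K)] [LieRing L] [LieAlgebra K L]
  [AddCommGroup V] [Module K V] [LieRingModule L V] [LieModule K L V] {D : L →ₗ[K] V}

lemma mem_deltaDer_half_iff :
    D ∈ deltaDer K L V (1 / 2) ↔ ∀ x y, (2 : K) • D ⁅x, y⁆ = ⁅x, D y⁆ - ⁅y, D x⁆ :=
  forall₂_congr fun x y => by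
    rw [← smul_sub, one_div, eq_inv_smul_iff₀ two_ne_zero]

lemma mem_deltaDer_half_of_map_lie (hD : ∀ x y : L, D ⁅x, y⁆ = ⁅x, D y⁆) :
    D ∈ deltaDer K L V (1 / 2) := by
  refine mem_deltaDer_half_iff.mpr fun x y => ?_
  rw [← hD, ← hD, ← lie_skew y x, map_neg]
  module

lemma lie_apply_comm (hD : D ∈ deltaDer K L V (1 / 2)) (x y : L) : ⁅x, D⁆ y = ⁅y, D⁆ x := by
  have h := mem_deltaDer_half_iff.mp hD
  apply smul_right_injective V (two_ne_zero : (2 : K) ≠ 0)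
  simp only [LieHom.lie_apply, smul_sub, h x y, h y x]
  module

lemma lie_apply_cyclic_sum_eq_zero (hD : D ∈ deltaDer K L V (1 / 2)) (x y z : L) :
    ⁅⁅x, y⁆, D z⁆ + ⁅⁅y, z⁆, D x⁆ + ⁅⁅z, x⁆, D y⁆ = 0 := by
  have h := mem_deltaDer_half_iff.mp hD
  have expand (a b c : L) : (2 : K) • (2 : K) • D ⁅a, ⁅b, c⁆⁆ =
      ⁅a, ⁅b, D c⁆⁆ - ⁅a, ⁅c, D b⁆⁆ - (2 : K) • ⁅⁅b, c⁆, D a⁆ := by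
    rw [h a ⁅b, c⁆, smul_sub, ← lie_smul, h b c, lie_sub]
  have jacobi : D ⁅x, ⁅y, z⁆⁆ + D ⁅y, ⁅z, x⁆⁆ + D ⁅z, ⁅x, y⁆⁆ = 0 := by
    rw [← map_add, ← map_add, lie_jacobi, map_zero]
  simp only [lie_lie] at expand ⊢
  linear_combination (norm := module)
    expand x y z + expand y z x + expand z x y - (4 : K) • jacobi

lemma lie_mem_deltaDer_half (hD : D ∈ deltaDer K L V (1 / 2)) (w : L) :
    ⁅w, D⁆ ∈ deltaDer K L V (1 / 2) := by
  have h := mem_deltaDer_half_iff.mp hD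
  refine mem_deltaDer_half_iff.mpr fun y z => ?_
  apply smul_right_injective V (two_ne_zero : (2 : K) ≠ 0)
  have eA : (2 : K) • ⁅w, D ⁅y, z⁆⁆ = ⁅w, ⁅y, D z⁆⁆ - ⁅w, ⁅z, D y⁆⁆ := by
    rw [← lie_smul, h y z, lie_sub]
  have eB : (2 : K) • D ⁅w, ⁅y, z⁆⁆ = ⁅w, D ⁅y, z⁆⁆ - ⁅⁅y, z⁆, D w⁆ := h w ⁅y, z⁆
  have eC : (2 : K) • ⁅y, D ⁅w, z⁆⁆ = ⁅y, ⁅w, D z⁆⁆ - ⁅y, ⁅z, D w⁆⁆ := by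
    rw [← lie_smul, h w z, lie_sub]
  have eD : (2 : K) • ⁅z, D ⁅w, y⁆⁆ = ⁅z, ⁅w, D y⁆⁆ - ⁅z, ⁅y, D w⁆⁆ := by
    rw [← lie_smul, h w y, lie_sub]
  have hc := lie_apply_cyclic_sum_eq_zero hD w y z
  simp only [lie_lie] at hc eB
  simp only [LieHom.lie_apply, lie_sub]
  linear_combination (norm := module) eA - (2 : K) • eB + eC - eD + hc

lemma apply_lie_eq_lie_apply_of_lie_eq_zero (hD : D ∈ deltaDer K L V (1 / 2)) {z : L}
    (hz : ⁅z, D⁆ = 0) (y : L) :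
    D ⁅y, z⁆ = ⁅y, D z⁆ := by
  have h := lie_apply_comm hD y z
  rw [hz, LieHom.lie_apply, LinearMap.zero_apply, sub_eq_zero] at h
  exact h.symm

variable (K L V) in
def halfDer : LieSubmodule K L (L →ₗ[K] V) where
  toSubmodule := deltaDer K L V (1 / 2)
  lie_mem hD := lie_mem_deltaDer_half hD _

end HalfDerivation

section Evaluation

variable {R L V : Type*} [CommRing R] [LieRing L] [LieAlgebra R L]
  [AddCommGroup V] [Module R V] [LieRingModule L V] [LieModule R L V]

lemma apply_mem_maxGenEigenspace {x : L} {c a : R} {F : L →ₗ[R] V}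
    (hF : F ∈ (toEnd R L (L →ₗ[R] V) x).maxGenEigenspace c) {z : L}
    (hz : z ∈ (toEnd R L L x).maxGenEigenspace a) :
    F z ∈ (toEnd R L V x).maxGenEigenspace (c + a) :=
  LieModule.weight_vector_multiplication _ _ _ (LieModule.liftLie R L _ L V LieModuleHom.id) c a x
    ⟨⟨F, hF⟩ ⊗ₜ ⟨z, hz⟩, by simp⟩

lemma apply_mem_genWeightSpace {H : LieSubalgebra R L} [LieRing.IsNilpotent H] {ν α : H → R}
    {F : L →ₗ[R] V} (hF : F ∈ genWeightSpace (L →ₗ[R] V) ν) {z : L} (hz : z ∈ rootSpace H α) :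
    F z ∈ genWeightSpace V (ν + α) := by
  rw [mem_genWeightSpace] at hF hz ⊢
  intro h
  exact (Module.End.mem_maxGenEigenspace _ _ _).mp <|
    apply_mem_maxGenEigenspace (x := (h : L))
      ((Module.End.mem_maxGenEigenspace _ _ _).mpr (hF h))
      ((Module.End.mem_maxGenEigenspace _ _ _).mpr (hz h))

end Evaluation

section Killing

variable {K L : Type*} [Field K] [CharZero K] [LieRing L] [LieAlgebra K L] [FiniteDimensional K L]
  [IsKilling K L] (H : LieSubalgebra K L) [H.IsCartanSubalgebra] [IsTriangularizable K H L]

lemma cartan_le_of_lie_rootSpace_neg_mem {p : Submodule K L}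
    (hp : ∀ α : Weight K H L, α.IsNonZero →
      ∀ y ∈ rootSpace H α, ∀ z ∈ rootSpace H (-α), ⁅y, z⁆ ∈ p) :
    H.toSubmodule ≤ p := by
  intro h hh
  have hmem : (⟨h, hh⟩ : H) ∈ ⨆ α : Weight K H L, ⨆ (_ : α.IsNonZero), corootSpace α := by
    rw [IsKilling.biSup_corootSpace_eq_top]; trivial
  refine LieSubmodule.iSup_induction _ (motive := fun x : H => (x : L) ∈ p) hmem ?_
    (zero_mem p) (fun _ _ => add_mem)
  intro α x hx
  refine LieSubmodule.iSup_induction _ (motive := fun x : H => (x : L) ∈ p) hx ?_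
    (zero_mem p) (fun _ _ => add_mem)
  intro hα x hx
  refine Submodule.span_le.mpr ?_ ((mem_corootSpace α).mp hx)
  rintro _ ⟨y, hy, z, hz, rfl⟩
  exact hp α hα y hy z hz

end Killing

section HighestWeight

variable {K L V : Type*} [Field K] [CharZero K] [LieRing L] [LieAlgebra K L]
  [FiniteDimensional K L] [IsKilling K L] {H : LieSubalgebra K L} [H.IsCartanSubalgebra]
  [IsTriangularizable K H L]
  [AddCommGroup V] [Module K V] [LieRingModule L V] [LieModule K L V]

lemma apply_eq_zero_of_genWeightSpace_add_eq_bot {ν α : H → K} (hν : ν ≠ 0)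
    (hα : genWeightSpace (halfDer K L V) (α + ν) = ⊥) {F : halfDer K L V}
    (hF : F ∈ genWeightSpace (halfDer K L V) ν) {z : L} (hz : z ∈ rootSpace H α) :
    (F : L →ₗ[K] V) z = 0 ∧ ∀ y : L, (F : L →ₗ[K] V) ⁅y, z⁆ = 0 := by
  obtain ⟨F, hFD⟩ := F
  have hzF : ⁅z, F⁆ = 0 := by
    have h := lie_mem_genWeightSpace_of_mem_genWeightSpace hz hF
    rw [hα, LieSubmodule.mem_bot] at h
    exact congrArg Subtype.val h
  have hα' : F z ∈ genWeightSpace V α := by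
    refine weightSpace_le_genWeightSpace V α ((mem_weightSpace α _).mpr fun h => ?_)
    calc ⁅(h : L), F z⁆ = F ⁅(h : L), z⁆ :=
          (apply_lie_eq_lie_apply_of_lie_eq_zero hFD hzF _).symm
      _ = α h • F z := by
          rw [← map_smul]; exact congrArg F (IsKilling.lie_eq_smul_of_mem_rootSpace hz h)
  have hνα : F z ∈ genWeightSpace V (ν + α) :=
    apply_mem_genWeightSpace
      (map_genWeightSpace_le ((halfDer K L V).incl.restrictLie H)
        (LieSubmodule.mem_map_of_mem hF)) hz
  have hne : α ≠ ν + α := fun h => hν (by simpa using h.symm)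
  have hFz : F z = 0 := (LieSubmodule.mem_bot _).mp
    ((disjoint_genWeightSpace K H V hne).le_bot ⟨hα', hνα⟩)
  exact ⟨hFz, fun y => by rw [apply_lie_eq_lie_apply_of_lie_eq_zero hFD hzF, hFz, lie_zero]⟩

lemma smul_apply_eq_of_mem_rootSpace {D : L →ₗ[K] V} (hD : D ∈ deltaDer K L V (1 / 2))
    (hDH : H.toSubmodule ≤ LinearMap.ker D) {ν α : H → K} (hν : ∀ h : H, ⁅(h : L), D⁆ = ν h • D)
    {z : L} (hz : z ∈ rootSpace H α) (h : H) :
    ν h • D z = α h • D z :=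
  calc ν h • D z = ⁅(h : L), D⁆ z := by rw [hν h, LinearMap.smul_apply]
    _ = ⁅z, D⁆ h := lie_apply_comm hD _ _
    _ = D ⁅(h : L), z⁆ := by
      rw [LieHom.lie_apply, LinearMap.mem_ker.mp (hDH h.2), lie_zero, zero_sub, ← map_neg,
        lie_skew]
    _ = α h • D z := by
      rw [← map_smul]; exact congrArg D (IsKilling.lie_eq_smul_of_mem_rootSpace hz h)

variable [FiniteDimensional K V]

lemma genWeightSpace_halfDer_eq_bot_of_forall_add_eq_bot (ℓ : (H → K) →ₗ[ℚ] ℚ)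
    (hℓ : ∀ α : Weight K H L, α.IsNonZero → ℓ α ≠ 0) {ν : H → K} (hν : 0 < ℓ ν)
    (hmax : ∀ α : H → K, 0 < ℓ α → genWeightSpace (halfDer K L V) (α + ν) = ⊥) :
    genWeightSpace (halfDer K L V) ν = ⊥ := by
  by_contra hne
  obtain ⟨⟨F, hFD⟩, hF0, hFν⟩ := exists_forall_lie_eq_smul K H (halfDer K L V) ⟨ν, hne⟩
  have hFgen : ⟨F, hFD⟩ ∈ genWeightSpace (halfDer K L V) ν :=
    weightSpace_le_genWeightSpace _ ν ((mem_weightSpace ν _).mpr hFν)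
  have hν0 : ν ≠ 0 := by rintro rfl; simp at hν
  have hpos {α : H → K} (hα : 0 < ℓ α) {z : L} (hz : z ∈ rootSpace H α) :=
    apply_eq_zero_of_genWeightSpace_add_eq_bot hν0 (hmax α hα) hFgen hz
  have hFH : H.toSubmodule ≤ LinearMap.ker F := by
    refine cartan_le_of_lie_rootSpace_neg_mem H fun α hα y hy z hz => ?_
    rcases (hℓ α hα).lt_or_gt with hneg | hpos'
    · exact (hpos (by rw [map_neg]; linarith) hz).2 y
    · rw [LinearMap.mem_ker, ← lie_skew, map_neg, (hpos hpos' hy).2 z, neg_zero]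
  have hFroot (β : H → K) (z : L) (hz : z ∈ rootSpace H β) : F z = 0 := by
    by_cases hβ : 0 < ℓ β
    · exact (hpos hβ hz).1
    obtain ⟨h, hh⟩ : ∃ h, ν h ≠ β h := Function.ne_iff.mp fun e => hβ (e ▸ hν)
    have key : ν h • F z = β h • F z :=
      smul_apply_eq_of_mem_rootSpace hFD hFH (fun h => congrArg Subtype.val (hFν h)) hz h
    exact (smul_eq_zero.mp (by rw [sub_smul, key, sub_self])).resolve_left (sub_ne_zero.mpr hh)
  refine hF0 (Subtype.ext (LinearMap.ext fun z => ?_))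
  have hz : z ∈ ⨆ β : H → K, rootSpace H β := by
    rw [iSup_genWeightSpace_eq_top]; trivial
  exact LieSubmodule.iSup_induction _ (motive := fun z => F z = 0) hz hFroot (map_zero F)
    fun _ _ h₁ h₂ => by rw [map_add, h₁, h₂, add_zero]

lemma genWeightSpace_halfDer_eq_bot {μ : H → K} (hμ : μ ≠ 0) :
    genWeightSpace (halfDer K L V) μ = ⊥ := by
  by_contra hμN
  obtain ⟨ℓ₀, hℓ₀⟩ := Module.exists_dual_forall_apply_ne_zero (K := ℚ)
    (fun i : Option {α : Weight K H L // α.IsNonZero} => i.elim μ fun α => α)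
    (by rintro (_ | ⟨α, hα⟩); exacts [hμ, hα])
  obtain ⟨ℓ, hℓμ, hℓ⟩ : ∃ ℓ : (H → K) →ₗ[ℚ] ℚ,
      0 < ℓ μ ∧ ∀ α : Weight K H L, α.IsNonZero → ℓ α ≠ 0 := by
    rcases (hℓ₀ none).lt_or_gt with h | h
    · exact ⟨-ℓ₀, by simpa using h, fun α hα => by simpa using hℓ₀ (some ⟨α, hα⟩)⟩
    · exact ⟨ℓ₀, h, fun α hα => hℓ₀ (some ⟨α, hα⟩)⟩
  obtain ⟨ν, hνN, hνmax⟩ := Set.exists_max_image {χ | genWeightSpace (halfDer K L V) χ ≠ ⊥} ℓ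
    (finite_genWeightSpace_ne_bot K H _) ⟨μ, hμN⟩
  refine hνN (genWeightSpace_halfDer_eq_bot_of_forall_add_eq_bot ℓ hℓ (hℓμ.trans_le (hνmax μ hμN))
    fun α hα => ?_)
  by_contra h
  have := hνmax _ h
  rw [map_add] at this
  linarith

end HighestWeight

section Trivial

variable {K L V : Type*} [Field K] [CharZero K] [IsAlgClosed K] [LieRing L] [LieAlgebra K L]
  [FiniteDimensional K L] [IsKilling K L]
  [AddCommGroup V] [Module K V] [LieRingModule L V] [LieModule K L V] [FiniteDimensional K V]

lemma isTrivial_halfDer : IsTrivial L (halfDer K L V) := by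
  obtain ⟨x, hx⟩ := exists_isCartanSubalgebra_engel K L
  set H := LieSubalgebra.engel K x
  have hN : genWeightSpace (halfDer K L V) (0 : H → K) = ⊤ := by
    refine eq_top_iff.mpr ((iSup_genWeightSpace_eq_top K H _).ge.trans (iSup_le fun χ => ?_))
    rcases eq_or_ne χ 0 with rfl | hχ
    · exact le_rfl
    · rw [genWeightSpace_halfDer_eq_bot hχ]; exact bot_le
  have hroot (α : H → K) (hα : α ≠ 0) (z : L) (hz : z ∈ rootSpace H α) :
      z ∈ LieModule.ker K L (halfDer K L V) := by
    refine (LieModule.mem_ker K L _ z).mpr fun F => ?_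
    have h := lie_mem_genWeightSpace_of_mem_genWeightSpace hz (hN ▸ LieSubmodule.mem_top F)
    rwa [add_zero, genWeightSpace_halfDer_eq_bot hα, LieSubmodule.mem_bot] at h
  have hH : H.toSubmodule ≤ (LieModule.ker K L (halfDer K L V)).toSubmodule :=
    cartan_le_of_lie_rootSpace_neg_mem H fun α hα y hy z _ =>
      lie_mem_left K L _ y z (hroot α hα y hy)
  refine ⟨fun z F => (LieModule.mem_ker K L _ z).mp ?_ F⟩
  have hz : z ∈ ⨆ α : H → K, rootSpace H α := by
    rw [iSup_genWeightSpace_eq_top]; trivial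
  refine LieSubmodule.iSup_induction _ (motive := (· ∈ LieModule.ker K L _)) hz (fun α z hz => ?_)
    (zero_mem _) fun _ _ => add_mem
  rcases eq_or_ne α 0 with rfl | hα
  · rw [rootSpace_zero_eq] at hz
    exact hH hz
  · exact hroot α hα z hz

lemma map_lie_of_mem_deltaDer_half {D : L →ₗ[K] V} (hD : D ∈ deltaDer K L V (1 / 2)) (x y : L) :
    D ⁅x, y⁆ = ⁅x, D y⁆ := by
  have h := congrArg (fun G : halfDer K L V => (G : L →ₗ[K] V) y)
    (isTrivial_halfDer.trivial x ⟨D, hD⟩)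
  exact (sub_eq_zero.mp h).symm

end Trivial

/-- for a finite-dimensional simple Lie algebra `L` over an algebraically closed
field of characteristic zero and a finite-dimensional `L`-module `V`, a linear map `D : L → V`
is a `(1/2)`-derivation if and only if it is a homomorphism of `L`-modules from the adjoint
module to `V`. -/
theorem halfDerivation_iff_moduleHom
    (K : Type*) [Field K] [IsAlgClosed K] [CharZero K]
    (L : Type*) [LieRing L] [LieAlgebra K L] [FiniteDimensional K L]
    [LieAlgebra.IsSimple K L]
    (V : Type*) [AddCommGroup V] [Module K V] [LieRingModule L V] [LieModule K L V]
    [FiniteDimensional K V]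
    (D : L →ₗ[K] V) :
    D ∈ deltaDer K L V (1 / 2) ↔ ∀ x y : L, D ⁅x, y⁆ = ⁅x, D y⁆ :=
  ⟨map_lie_of_mem_deltaDer_half, mem_deltaDer_half_of_map_lie⟩
end

section
/- Let L₁ and L₂ be Lie algebras over a field K, let V be a module over the direct sum Lie algebra L₁ ⊕ L₂ (so V is simultaneously an L₁-module and an L₂-module with commuting actions), and let δ ∈ K be nonzero. Then the map sending D ∈ Der_δ(L₁ ⊕ L₂, V) to the pair (D|_{L₁}, D|_{L₂}) of its restrictions is a K-linear isomorphism from Der_δ(L₁ ⊕ L₂, V) onto the subspace of pairs (D₁, D₂) ∈ Der_δ(L₁,V) × Der_δ(L₂,V) satisfying x₁ • D₂(x₂) = x₂ • D₁(x₁) for all x₁ ∈ L₁ and x₂ ∈ L₂. -/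
section ProdLie

variable (K : Type*) [CommRing K] (L₁ L₂ : Type*) [LieRing L₁] [LieAlgebra K L₁]
  [LieRing L₂] [LieAlgebra K L₂]

/-- The direct sum of two Lie algebras, with the componentwise bracket. -/
instance Prod.instLieRing : LieRing (L₁ × L₂) where
  bracket x y := (⁅x.1, y.1⁆, ⁅x.2, y.2⁆)
  add_lie x y z := Prod.ext (add_lie x.1 y.1 z.1) (add_lie x.2 y.2 z.2)
  lie_add x y z := Prod.ext (lie_add x.1 y.1 z.1) (lie_add x.2 y.2 z.2)
  lie_self x := Prod.ext (lie_self x.1) (lie_self x.2)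
  leibniz_lie x y z := Prod.ext (leibniz_lie x.1 y.1 z.1) (leibniz_lie x.2 y.2 z.2)

@[simp] lemma Prod.lie_def' (x y : L₁ × L₂) : ⁅x, y⁆ = (⁅x.1, y.1⁆, ⁅x.2, y.2⁆) := rfl

instance Prod.instLieAlgebra : LieAlgebra K (L₁ × L₂) where
  lie_smul c x y := Prod.ext (lie_smul c x.1 y.1) (lie_smul c x.2 y.2)

variable (V : Type*) [AddCommGroup V] [Module K V]
  [LieRingModule L₁ V] [LieModule K L₁ V] [LieRingModule L₂ V] [LieModule K L₂ V]

/-- `δ`-derivations of the direct sum Lie algebra `L₁ ⊕ L₂` with values in `V`, where `V`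
is simultaneously an `L₁`- and an `L₂`-module, and `(x₁, x₂) ∈ L₁ ⊕ L₂` acts on `v ∈ V` by
`⁅x₁, v⁆ + ⁅x₂, v⁆`. -/
def deltaDerSum (δ : K) : Submodule K ((L₁ × L₂) →ₗ[K] V) where
  carrier := {D | ∀ x y : L₁ × L₂, D ⁅x, y⁆ =
      δ • (⁅x.1, D y⁆ + ⁅x.2, D y⁆) - δ • (⁅y.1, D x⁆ + ⁅y.2, D x⁆)}
  zero_mem' := by intro x y; simp
  add_mem' := by
    intro a b ha hb x y
    simp only [LinearMap.add_apply, ha x y, hb x y, lie_add, smul_add]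
    abel
  smul_mem' := by
    intro c a ha x y
    simp only [LinearMap.smul_apply, ha x y, lie_smul, smul_sub, smul_add, smul_comm c δ]

/-- The subspace of pairs `(D₁, D₂) ∈ Der_δ(L₁,V) × Der_δ(L₂,V)` satisfying the compatibility
condition `x₁ • D₂(x₂) = x₂ • D₁(x₁)`. -/
def compatPairs (δ : K) :
    Submodule K (↥(deltaDer K L₁ V δ) × ↥(deltaDer K L₂ V δ)) where
  carrier := {p | ∀ (x₁ : L₁) (x₂ : L₂),
      ⁅x₁, (p.2 : L₂ →ₗ[K] V) x₂⁆ = ⁅x₂, (p.1 : L₁ →ₗ[K] V) x₁⁆}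
  zero_mem' := by intro x₁ x₂; simp
  add_mem' := by
    intro a b ha hb x₁ x₂
    simp only [Prod.fst_add, Prod.snd_add, Submodule.coe_add, LinearMap.add_apply, lie_add,
      ha x₁ x₂, hb x₁ x₂]
  smul_mem' := by
    intro c a ha x₁ x₂
    simp only [Prod.smul_fst, Prod.smul_snd, SetLike.val_smul, LinearMap.smul_apply, lie_smul,
      ha x₁ x₂]

end ProdLie

/-!
A δ-derivation of `L₁ ⊕ L₂` is the sum of its restrictions to the two summands. Since the
summands commute, evaluating the δ-derivation identity at `x₁ ∈ L₁`, `x₂ ∈ L₂` gives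
`0 = δ • (x₁ • D x₂ - x₂ • D x₁)`, which is the compatibility condition once `δ` is cancelled;
conversely, for a compatible pair the cross terms in the identity for `D₁ ∘ fst + D₂ ∘ snd` cancel.
-/

section Restriction

variable {K : Type*} [CommRing K] {L₁ L₂ : Type*} [LieRing L₁] [LieAlgebra K L₁]
  [LieRing L₂] [LieAlgebra K L₂] {V : Type*} [AddCommGroup V] [Module K V]
  [LieRingModule L₁ V] [LieModule K L₁ V] [LieRingModule L₂ V] [LieModule K L₂ V] {δ : K}

namespace deltaDerSum

theorem comp_inl_mem {D : (L₁ × L₂) →ₗ[K] V} (hD : D ∈ deltaDerSum K L₁ L₂ V δ) :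
    D ∘ₗ LinearMap.inl K L₁ L₂ ∈ deltaDer K L₁ V δ := by
  intro x y
  simpa using hD (x, 0) (y, 0)

theorem comp_inr_mem {D : (L₁ × L₂) →ₗ[K] V} (hD : D ∈ deltaDerSum K L₁ L₂ V δ) :
    D ∘ₗ LinearMap.inr K L₁ L₂ ∈ deltaDer K L₂ V δ := by
  intro x y
  simpa using hD (0, x) (0, y)

theorem lie_apply_inr_eq_lie_apply_inl (hδ : IsSMulRegular V δ) {D : (L₁ × L₂) →ₗ[K] V}
    (hD : D ∈ deltaDerSum K L₁ L₂ V δ) (x₁ : L₁) (x₂ : L₂) :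
    ⁅x₁, D (0, x₂)⁆ = ⁅x₂, D (x₁, 0)⁆ := by
  have h := hD (x₁, 0) (0, x₂)
  simp only [Prod.lie_def', lie_zero, zero_lie, Prod.mk_zero_zero, map_zero, add_zero,
    zero_add] at h
  exact hδ (sub_eq_zero.mp h.symm)

end deltaDerSum

theorem coprod_mem_deltaDerSum {D₁ : L₁ →ₗ[K] V} {D₂ : L₂ →ₗ[K] V}
    (h₁ : D₁ ∈ deltaDer K L₁ V δ) (h₂ : D₂ ∈ deltaDer K L₂ V δ)
    (hcompat : ∀ (x₁ : L₁) (x₂ : L₂), ⁅x₁, D₂ x₂⁆ = ⁅x₂, D₁ x₁⁆) :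
    D₁.coprod D₂ ∈ deltaDerSum K L₁ L₂ V δ := by
  intro x y
  simp only [LinearMap.coprod_apply, Prod.lie_def', h₁ x.1 y.1, h₂ x.2 y.2, lie_add, smul_add,
    hcompat x.1 y.2, hcompat y.1 x.2]
  abel

def deltaDerSumEquivCompatPairs (hδ : IsSMulRegular V δ) :
    deltaDerSum K L₁ L₂ V δ ≃ₗ[K] compatPairs K L₁ L₂ V δ where
  toFun D := ⟨(⟨_, deltaDerSum.comp_inl_mem D.2⟩, ⟨_, deltaDerSum.comp_inr_mem D.2⟩),
    deltaDerSum.lie_apply_inr_eq_lie_apply_inl hδ D.2⟩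
  invFun p := ⟨_, coprod_mem_deltaDerSum p.1.1.2 p.1.2.2 p.2⟩
  map_add' _ _ := rfl
  map_smul' _ _ := rfl
  left_inv D := Subtype.ext <| by simp [← LinearMap.comp_coprod]
  right_inv p := by ext <;> simp

end Restriction

theorem deltaDerSum_equiv_compatPairs_general
    (K : Type*) [Field K] (L₁ L₂ : Type*) [LieRing L₁] [LieAlgebra K L₁]
    [LieRing L₂] [LieAlgebra K L₂]
    (V : Type*) [AddCommGroup V] [Module K V]
    [LieRingModule L₁ V] [LieModule K L₁ V] [LieRingModule L₂ V] [LieModule K L₂ V]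
    (δ : K) (hδ : δ ≠ 0) :
    ∃ e : ↥(deltaDerSum K L₁ L₂ V δ) ≃ₗ[K] ↥(compatPairs K L₁ L₂ V δ),
      ∀ D : ↥(deltaDerSum K L₁ L₂ V δ),
        ((e D : ↥(deltaDer K L₁ V δ) × ↥(deltaDer K L₂ V δ)).1 : L₁ →ₗ[K] V)
            = (D : (L₁ × L₂) →ₗ[K] V) ∘ₗ LinearMap.inl K L₁ L₂ ∧
        ((e D : ↥(deltaDer K L₁ V δ) × ↥(deltaDer K L₂ V δ)).2 : L₂ →ₗ[K] V)
            = (D : (L₁ × L₂) →ₗ[K] V) ∘ₗ LinearMap.inr K L₁ L₂ :=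
  ⟨deltaDerSumEquivCompatPairs (.of_ne_zero hδ), fun _ => ⟨rfl, rfl⟩⟩

/-- for a nonzero `δ`, restriction to the two summands yields a linear isomorphism
from `Der_δ(L₁ ⊕ L₂, V)` onto the subspace of compatible pairs in `Der_δ(L₁,V) × Der_δ(L₂,V)`. -/
theorem deltaDerSum_equiv_compatPairs
    (K : Type*) [Field K] (L₁ L₂ : Type*) [LieRing L₁] [LieAlgebra K L₁]
    [LieRing L₂] [LieAlgebra K L₂]
    (V : Type*) [AddCommGroup V] [Module K V]
    [LieRingModule L₁ V] [LieModule K L₁ V] [LieRingModule L₂ V] [LieModule K L₂ V]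
    (hcomm : ∀ (x₁ : L₁) (x₂ : L₂) (v : V), ⁅x₁, ⁅x₂, v⁆⁆ = ⁅x₂, ⁅x₁, v⁆⁆)
    (δ : K) (hδ : δ ≠ 0) :
    ∃ e : ↥(deltaDerSum K L₁ L₂ V δ) ≃ₗ[K] ↥(compatPairs K L₁ L₂ V δ),
      ∀ D : ↥(deltaDerSum K L₁ L₂ V δ),
        ((e D : ↥(deltaDer K L₁ V δ) × ↥(deltaDer K L₂ V δ)).1 : L₁ →ₗ[K] V)
            = (D : (L₁ × L₂) →ₗ[K] V) ∘ₗ LinearMap.inl K L₁ L₂ ∧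
        ((e D : ↥(deltaDer K L₁ V δ) × ↥(deltaDer K L₂ V δ)).2 : L₂ →ₗ[K] V)
            = (D : (L₁ × L₂) →ₗ[K] V) ∘ₗ LinearMap.inr K L₁ L₂ :=
  deltaDerSum_equiv_compatPairs_general K L₁ L₂ V δ hδ
end

section
/- Let L₁ and L₂ be perfect Lie algebras over a field K, let V₁ be an irreducible L₁-module and V₂ an irreducible L₂-module, regard V₁ ⊗ V₂ as a module over the direct sum Lie algebra L₁ ⊕ L₂, and let δ ∈ K with δ ≠ 1. If both V₁ and V₂ are nontrivial modules, or both V₁ and V₂ are trivial one-dimensional modules, then Der_δ(L₁ ⊕ L₂, V₁ ⊗ V₂) = 0. -/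
open scoped TensorProduct

section ProdLie

variable (K : Type*) [CommRing K] (L₁ L₂ : Type*) [LieRing L₁] [LieAlgebra K L₁]
  [LieRing L₂] [LieAlgebra K L₂]

variable (V₁ V₂ : Type*) [AddCommGroup V₁] [Module K V₁] [LieRingModule L₁ V₁]
  [LieModule K L₁ V₁] [AddCommGroup V₂] [Module K V₂] [LieRingModule L₂ V₂] [LieModule K L₂ V₂]

/-- The action of `(x₁, x₂) ∈ L₁ ⊕ L₂` on the tensor product `V₁ ⊗ V₂` of an `L₁`-module `V₁`
and an `L₂`-module `V₂`: `x₁` acts on the first tensor factor and `x₂` on the second. -/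
noncomputable def sumActT (x : L₁ × L₂) : V₁ ⊗[K] V₂ →ₗ[K] V₁ ⊗[K] V₂ :=
  LinearMap.rTensor V₂ (LieModule.toEnd K L₁ V₁ x.1) +
    LinearMap.lTensor V₁ (LieModule.toEnd K L₂ V₂ x.2)

/-- `δ`-derivations of the direct sum Lie algebra `L₁ ⊕ L₂` with values in `V₁ ⊗ V₂`. -/
noncomputable def deltaDerSumTensor (δ : K) :
    Submodule K ((L₁ × L₂) →ₗ[K] V₁ ⊗[K] V₂) where
  carrier := {D | ∀ x y : L₁ × L₂, D ⁅x, y⁆ =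
      δ • sumActT K L₁ L₂ V₁ V₂ x (D y) - δ • sumActT K L₁ L₂ V₁ V₂ y (D x)}
  zero_mem' := by intro x y; simp
  add_mem' := by
    intro a b ha hb x y
    simp only [LinearMap.add_apply, ha x y, hb x y, map_add, smul_add]
    abel
  smul_mem' := by
    intro c a ha x y
    simp only [LinearMap.smul_apply, ha x y, map_smul, smul_sub, smul_comm c δ]

end ProdLie

open LinearMap TensorProduct

section TensorSeparation

variable {K V W : Type*} [CommRing K] [AddCommGroup V] [Module K V] [AddCommGroup W] [Module K W]

theorem TensorProduct.equivFinsuppOfBasisRight_rTensor {κ : Type*} [DecidableEq κ]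
    (𝒞 : Module.Basis κ K W) (f : V →ₗ[K] V) (x : V ⊗[K] W) (i : κ) :
    equivFinsuppOfBasisRight 𝒞 (rTensor W f x) i = f (equivFinsuppOfBasisRight 𝒞 x i) := by
  induction x with
  | zero => simp
  | tmul v w => simp
  | add x y hx hy => simp_all

theorem TensorProduct.eq_zero_of_forall_rTensor_eq_zero [Module.Free K W] {ι : Type*}
    (F : ι → V →ₗ[K] V) (hF : ∀ v, (∀ i, F i v = 0) → v = 0) {x : V ⊗[K] W}
    (hx : ∀ i, rTensor W (F i) x = 0) : x = 0 := by
  classical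
  let E := equivFinsuppOfBasisRight (Module.Free.chooseBasis K W) (M := V)
  refine E.map_eq_zero_iff.mp (Finsupp.ext fun j => hF _ fun i => ?_)
  rw [← equivFinsuppOfBasisRight_rTensor, hx i, map_zero, Finsupp.zero_apply]

theorem TensorProduct.eq_zero_of_forall_lTensor_eq_zero [Module.Free K V] {ι : Type*}
    (F : ι → W →ₗ[K] W) (hF : ∀ w, (∀ i, F i w = 0) → w = 0) {x : V ⊗[K] W}
    (hx : ∀ i, lTensor V (F i) x = 0) : x = 0 := by
  refine (TensorProduct.comm K V W).map_eq_zero_iff.mp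
    (eq_zero_of_forall_rTensor_eq_zero F hF fun i => ?_)
  rw [← comm_comp_lTensor_comp_comm_eq]
  simp [hx i]

end TensorSeparation

theorem LinearMap.eq_zero_of_forall_map_lie_eq_zero {K L M : Type*} [CommRing K] [LieRing L]
    [LieAlgebra K L] [AddCommGroup M] [Module K M]
    (hL : ⁅(⊤ : LieIdeal K L), (⊤ : LieIdeal K L)⁆ = ⊤) (f : L →ₗ[K] M)
    (hf : ∀ x y : L, f ⁅x, y⁆ = 0) : f = 0 := by
  have hspan : Submodule.span K {z : L | ∃ x ∈ (⊤ : LieIdeal K L), ∃ y ∈ (⊤ : LieIdeal K L),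
      ⁅x, y⁆ = z} = ⊤ := by
    rw [← LieSubmodule.lieIdeal_oper_eq_linear_span', hL, LieSubmodule.top_toSubmodule]
  refine LinearMap.ext_on hspan ?_
  rintro _ ⟨x, -, y, -, rfl⟩
  exact hf x y

theorem LieModule.eq_zero_of_forall_lie_eq_zero {K L V : Type*} [CommRing K] [LieRing L]
    [LieAlgebra K L] [AddCommGroup V] [Module K V] [LieRingModule L V] [LieModule K L V]
    [LieModule.IsIrreducible K L V] (hV : ¬ LieModule.IsTrivial L V) {v : V}
    (hv : ∀ x : L, ⁅x, v⁆ = 0) : v = 0 := by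
  have hbot : LieModule.maxTrivSubmodule K L V = ⊥ :=
    (eq_bot_or_eq_top _).resolve_right fun h => hV ((isTrivial_iff_max_triv_eq_top K L V).mpr h)
  simpa [hbot] using (LieModule.mem_maxTrivSubmodule K L V v).mpr hv

theorem deltaDerivation_map_lie_apply {K L M : Type*} [Field K] [LieRing L] [LieAlgebra K L]
    [AddCommGroup M] [Module K M] {ρ : L → Module.End K M} {δ : K} {D : L →ₗ[K] M}
    (hρ : ∀ x y, ρ ⁅x, y⁆ = ρ x * ρ y - ρ y * ρ x)
    (hD : ∀ x y, D ⁅x, y⁆ = δ • ρ x (D y) - δ • ρ y (D x))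
    (hδ₀ : δ ≠ 0) (hδ₁ : δ ≠ 1) (x y z : L) :
    ρ ⁅x, y⁆ (D z) = ρ ⁅x, z⁆ (D y) - ρ ⁅y, z⁆ (D x) := by
  have expand : ∀ p q r : L, ρ ⁅p, q⁆ (D r) = ρ p (ρ q (D r)) - ρ q (ρ p (D r)) := by
    simp [hρ]
  have jacobi : D ⁅⁅x, y⁆, z⁆ = D ⁅x, ⁅y, z⁆⁆ - D ⁅y, ⁅x, z⁆⁆ := by
    rw [← map_sub, ← lie_lie]
  rw [hD ⁅x, y⁆ z, hD x ⁅y, z⁆, hD y ⁅x, z⁆, hD x y, hD y z, hD x z] at jacobi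
  simp only [map_sub, map_smul, expand] at jacobi
  rw [expand, expand, expand, ← sub_eq_zero]
  -- expanding Jacobi leaves `δ (1 - δ)` times the identity
  have key : (δ * (1 - δ)) • (ρ x (ρ y (D z)) - ρ y (ρ x (D z)) -
      (ρ x (ρ z (D y)) - ρ z (ρ x (D y)) - (ρ y (ρ z (D x)) - ρ z (ρ y (D x))))) = 0 := by
    linear_combination (norm := module) jacobi
  exact (smul_eq_zero.mp key).resolve_left (mul_ne_zero hδ₀ (sub_ne_zero.mpr hδ₁.symm))

section SumTensor

variable {K : Type*} [Field K] {L₁ L₂ : Type*} [LieRing L₁] [LieAlgebra K L₁]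
  [LieRing L₂] [LieAlgebra K L₂]
  {V₁ V₂ : Type*} [AddCommGroup V₁] [Module K V₁] [LieRingModule L₁ V₁] [LieModule K L₁ V₁]
  [AddCommGroup V₂] [Module K V₂] [LieRingModule L₂ V₂] [LieModule K L₂ V₂]

theorem LinearMap.eq_zero_of_forall_map_lie_eq_zero_prod {M : Type*} [AddCommGroup M]
    [Module K M] (hL₁ : ⁅(⊤ : LieIdeal K L₁), (⊤ : LieIdeal K L₁)⁆ = ⊤)
    (hL₂ : ⁅(⊤ : LieIdeal K L₂), (⊤ : LieIdeal K L₂)⁆ = ⊤) (f : L₁ × L₂ →ₗ[K] M)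
    (hf : ∀ x y : L₁ × L₂, f ⁅x, y⁆ = 0) : f = 0 := by
  refine LinearMap.prod_ext ?_ ?_
  · refine eq_zero_of_forall_map_lie_eq_zero hL₁ _ fun a b => ?_
    simpa using hf (a, 0) (b, 0)
  · refine eq_zero_of_forall_map_lie_eq_zero hL₂ _ fun a b => ?_
    simpa using hf (0, a) (0, b)

variable (K V₁ V₂) in
theorem sumActT_lie (x y : L₁ × L₂) :
    sumActT K L₁ L₂ V₁ V₂ ⁅x, y⁆ =
      sumActT K L₁ L₂ V₁ V₂ x * sumActT K L₁ L₂ V₁ V₂ y -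
        sumActT K L₁ L₂ V₁ V₂ y * sumActT K L₁ L₂ V₁ V₂ x := by
  ext v w
  simp [sumActT, sub_tmul, tmul_sub]
  abel

theorem sumActT_inl (a : L₁) :
    sumActT K L₁ L₂ V₁ V₂ (a, 0) = rTensor V₂ (LieModule.toEnd K L₁ V₁ a) := by
  simp [sumActT]

theorem sumActT_inr (c : L₂) :
    sumActT K L₁ L₂ V₁ V₂ (0, c) = lTensor V₁ (LieModule.toEnd K L₂ V₂ c) := by
  simp [sumActT]

theorem sumActT_eq_zero [LieModule.IsTrivial L₁ V₁] [LieModule.IsTrivial L₂ V₂]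
    (x : L₁ × L₂) : sumActT K L₁ L₂ V₁ V₂ x = 0 := by
  ext v w
  simp [sumActT, trivial_lie_zero]

variable {δ : K} {D : L₁ × L₂ →ₗ[K] V₁ ⊗[K] V₂}

theorem apply_inr_eq_zero_of_mem_deltaDerSumTensor
    (hL₁ : ⁅(⊤ : LieIdeal K L₁), (⊤ : LieIdeal K L₁)⁆ = ⊤) [LieModule.IsIrreducible K L₁ V₁]
    (hV₁ : ¬ LieModule.IsTrivial L₁ V₁) (hD : D ∈ deltaDerSumTensor K L₁ L₂ V₁ V₂ δ)
    (hδ₀ : δ ≠ 0) (hδ₁ : δ ≠ 1) (c : L₂) : D (0, c) = 0 := by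
  have hbracket : ∀ a b : L₁, rTensor V₂ (LieModule.toEnd K L₁ V₁ ⁅a, b⁆) (D (0, c)) = 0 :=
    fun a b => by
      simpa [sumActT_inl] using
        deltaDerivation_map_lie_apply (sumActT_lie K V₁ V₂) hD hδ₀ hδ₁ (a, 0) (b, 0) (0, c)
  have hall : ∀ a : L₁, rTensor V₂ (LieModule.toEnd K L₁ V₁ a) (D (0, c)) = 0 :=
    LinearMap.congr_fun <| eq_zero_of_forall_map_lie_eq_zero hL₁
      (applyₗ (D (0, c)) ∘ₗ (rTensorHom V₂ : Module.End K V₁ →ₗ[K] _) ∘ₗ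
        (LieModule.toEnd K L₁ V₁ : L₁ →ₗ[K] Module.End K V₁)) hbracket
  exact eq_zero_of_forall_rTensor_eq_zero (fun a => LieModule.toEnd K L₁ V₁ a)
    (fun v hv => LieModule.eq_zero_of_forall_lie_eq_zero (K := K) hV₁ hv) hall

theorem apply_inl_eq_zero_of_mem_deltaDerSumTensor
    (hL₂ : ⁅(⊤ : LieIdeal K L₂), (⊤ : LieIdeal K L₂)⁆ = ⊤) [LieModule.IsIrreducible K L₂ V₂]
    (hV₂ : ¬ LieModule.IsTrivial L₂ V₂) (hD : D ∈ deltaDerSumTensor K L₁ L₂ V₁ V₂ δ)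
    (hδ₀ : δ ≠ 0) (hδ₁ : δ ≠ 1) (a : L₁) : D (a, 0) = 0 := by
  have hbracket : ∀ c d : L₂, lTensor V₁ (LieModule.toEnd K L₂ V₂ ⁅c, d⁆) (D (a, 0)) = 0 :=
    fun c d => by
      simpa [sumActT_inr] using
        deltaDerivation_map_lie_apply (sumActT_lie K V₁ V₂) hD hδ₀ hδ₁ (0, c) (0, d) (a, 0)
  have hall : ∀ c : L₂, lTensor V₁ (LieModule.toEnd K L₂ V₂ c) (D (a, 0)) = 0 :=
    LinearMap.congr_fun <| eq_zero_of_forall_map_lie_eq_zero hL₂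
      (applyₗ (D (a, 0)) ∘ₗ (lTensorHom V₁ : Module.End K V₂ →ₗ[K] _) ∘ₗ
        (LieModule.toEnd K L₂ V₂ : L₂ →ₗ[K] Module.End K V₂)) hbracket
  exact eq_zero_of_forall_lTensor_eq_zero (fun c => LieModule.toEnd K L₂ V₂ c)
    (fun w hw => LieModule.eq_zero_of_forall_lie_eq_zero (K := K) hV₂ hw) hall

end SumTensor

/-- for perfect Lie algebras `L₁`, `L₂`, irreducible modules `V₁`, `V₂`, and
`δ ≠ 1`: if both modules are nontrivial, or both are trivial one-dimensional, then
`Der_δ(L₁ ⊕ L₂, V₁ ⊗ V₂) = 0`. -/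
theorem deltaDerSumTensor_eq_bot
    (K : Type*) [Field K] (L₁ L₂ : Type*) [LieRing L₁] [LieAlgebra K L₁]
    [LieRing L₂] [LieAlgebra K L₂]
    (hL₁ : ⁅(⊤ : LieIdeal K L₁), (⊤ : LieIdeal K L₁)⁆ = ⊤)
    (hL₂ : ⁅(⊤ : LieIdeal K L₂), (⊤ : LieIdeal K L₂)⁆ = ⊤)
    (V₁ V₂ : Type*) [AddCommGroup V₁] [Module K V₁] [LieRingModule L₁ V₁] [LieModule K L₁ V₁]
    [AddCommGroup V₂] [Module K V₂] [LieRingModule L₂ V₂] [LieModule K L₂ V₂]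
    [LieModule.IsIrreducible K L₁ V₁] [LieModule.IsIrreducible K L₂ V₂]
    (δ : K) (hδ : δ ≠ 1)
    (hV : (¬ LieModule.IsTrivial L₁ V₁ ∧ ¬ LieModule.IsTrivial L₂ V₂) ∨
      (LieModule.IsTrivial L₁ V₁ ∧ LieModule.IsTrivial L₂ V₂ ∧
        Module.finrank K V₁ = 1 ∧ Module.finrank K V₂ = 1)) :
    deltaDerSumTensor K L₁ L₂ V₁ V₂ δ = ⊥ := by
  refine (Submodule.eq_bot_iff _).mpr fun D hD => ?_
  rcases hV with ⟨hV₁, hV₂⟩ | ⟨hV₁, hV₂, -, -⟩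
  · by_cases hδ₀ : δ = 0
    · refine eq_zero_of_forall_map_lie_eq_zero_prod hL₁ hL₂ D fun x y => ?_
      rw [hD x y, hδ₀]
      simp
    · refine LinearMap.prod_ext (LinearMap.ext fun a => ?_) (LinearMap.ext fun c => ?_)
      · exact apply_inl_eq_zero_of_mem_deltaDerSumTensor hL₂ hV₂ hD hδ₀ hδ a
      · exact apply_inr_eq_zero_of_mem_deltaDerSumTensor hL₁ hV₁ hD hδ₀ hδ c
  · refine eq_zero_of_forall_map_lie_eq_zero_prod hL₁ hL₂ D fun x y => ?_
    rw [hD x y]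
    simp [sumActT_eq_zero]
end

section
/- Let L₁ and L₂ be perfect Lie algebras over a field K, let V₁ be a nontrivial irreducible L₁-module, let V₂ = K be the trivial one-dimensional L₂-module, regard V₁ ⊗ V₂ as a module over the direct sum Lie algebra L₁ ⊕ L₂, and let δ ∈ K with δ ≠ 1. Then there is a K-linear isomorphism Der_δ(L₁ ⊕ L₂, V₁ ⊗ V₂) ≅ Der_δ(L₁, V₁). -/
open scoped TensorProduct

/-! Because `L₂` acts trivially on `V₂ ≅ K`, it acts by zero on `V₁ ⊗ V₂`, so a `δ`-derivation
`D` of `L₁ ⊕ L₂` kills every bracket `⁅(0, a), (0, b)⁆`; as `L₂` is perfect, `D` vanishes on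
`0 ⊕ L₂`. Hence `D` is determined by its restriction to `L₁`, which under `V₁ ⊗ V₂ ≅ V₁` is a
`δ`-derivation of `L₁`, and conversely every `δ`-derivation of `L₁` extends by zero along `L₂`. -/

theorem LinearMap.eq_zero_of_map_lie_eq_zero {K L M : Type*} [CommRing K] [LieRing L]
    [LieAlgebra K L] [AddCommMonoid M] [Module K M]
    (hL : ⁅(⊤ : LieIdeal K L), (⊤ : LieIdeal K L)⁆ = ⊤) (f : L →ₗ[K] M)
    (hf : ∀ x y : L, f ⁅x, y⁆ = 0) : f = 0 := by
  have hle : (⁅(⊤ : LieIdeal K L), (⊤ : LieIdeal K L)⁆ : LieIdeal K L).toSubmodule ≤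
      LinearMap.ker f := by
    rw [LieSubmodule.lieIdeal_oper_eq_linear_span, Submodule.span_le]
    rintro _ ⟨x, y, rfl⟩
    exact hf x y
  ext z
  exact hle (by rw [hL]; trivial)

namespace TensorProduct

variable {R M N P : Type*} [CommSemiring R] [AddCommMonoid M] [Module R M] [AddCommMonoid N]
  [Module R N] [AddCommMonoid P] [Module R P]

variable (M) in
noncomputable def ridOfEquiv (ψ : N ≃ₗ[R] R) : M ⊗[R] N ≃ₗ[R] M :=
  (LinearEquiv.lTensor M ψ).trans (TensorProduct.rid R M)

theorem ridOfEquiv_rTensor (ψ : N ≃ₗ[R] R) (f : M →ₗ[R] P) (t : M ⊗[R] N) :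
    ridOfEquiv P ψ (LinearMap.rTensor N f t) = f (ridOfEquiv M ψ t) := by
  induction t using TensorProduct.induction_on with
  | zero => simp
  | tmul m n => simp [ridOfEquiv]
  | add a b ha hb => simp [ha, hb]

end TensorProduct

open TensorProduct

section TrivialSecondFactor

variable {K L₁ L₂ V₁ V₂ : Type*} [CommRing K] [LieRing L₁] [LieAlgebra K L₁]
  [LieRing L₂] [LieAlgebra K L₂] [AddCommGroup V₁] [Module K V₁] [LieRingModule L₁ V₁]
  [LieModule K L₁ V₁] [AddCommGroup V₂] [Module K V₂] [LieRingModule L₂ V₂] [LieModule K L₂ V₂]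
  [LieModule.IsTrivial L₂ V₂] {δ : K}

theorem sumActT_of_isTrivial (x : L₁ × L₂) :
    sumActT K L₁ L₂ V₁ V₂ x = LinearMap.rTensor V₂ (LieModule.toEnd K L₁ V₁ x.1) := by
  have : LieModule.toEnd K L₂ V₂ x.2 = 0 := by ext; exact trivial_lie_zero _ _ _ _
  simp [sumActT, this]

theorem ridOfEquiv_sumActT (ψ : V₂ ≃ₗ[K] K) (x : L₁ × L₂) (t : V₁ ⊗[K] V₂) :
    ridOfEquiv V₁ ψ (sumActT K L₁ L₂ V₁ V₂ x t) = ⁅x.1, ridOfEquiv V₁ ψ t⁆ := by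
  rw [sumActT_of_isTrivial, ridOfEquiv_rTensor, LieModule.toEnd_apply_apply]

theorem sumActT_ridOfEquiv_symm (ψ : V₂ ≃ₗ[K] K) (x : L₁ × L₂) (v : V₁) :
    sumActT K L₁ L₂ V₁ V₂ x ((ridOfEquiv V₁ ψ).symm v) = (ridOfEquiv V₁ ψ).symm ⁅x.1, v⁆ := by
  rw [LinearEquiv.eq_symm_apply, ridOfEquiv_sumActT, LinearEquiv.apply_symm_apply]

theorem comp_inr_eq_zero_of_mem_deltaDerSumTensor
    (hL₂ : ⁅(⊤ : LieIdeal K L₂), (⊤ : LieIdeal K L₂)⁆ = ⊤) {D : L₁ × L₂ →ₗ[K] V₁ ⊗[K] V₂}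
    (hD : D ∈ deltaDerSumTensor K L₁ L₂ V₁ V₂ δ) : D ∘ₗ LinearMap.inr K L₁ L₂ = 0 := by
  refine LinearMap.eq_zero_of_map_lie_eq_zero hL₂ _ fun a b => ?_
  have hbracket : LinearMap.inr K L₁ L₂ ⁅a, b⁆ =
      ⁅LinearMap.inr K L₁ L₂ a, LinearMap.inr K L₁ L₂ b⁆ := (LieHom.inr K L₁ L₂).map_lie a b
  rw [LinearMap.comp_apply, hbracket, hD, sumActT_of_isTrivial, sumActT_of_isTrivial]
  simp

theorem comp_inl_mem_deltaDer (ψ : V₂ ≃ₗ[K] K) {D : L₁ × L₂ →ₗ[K] V₁ ⊗[K] V₂}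
    (hD : D ∈ deltaDerSumTensor K L₁ L₂ V₁ V₂ δ) :
    (ridOfEquiv V₁ ψ).toLinearMap ∘ₗ D ∘ₗ LinearMap.inl K L₁ L₂ ∈ deltaDer K L₁ V₁ δ := by
  intro x y
  have hbracket : LinearMap.inl K L₁ L₂ ⁅x, y⁆ =
      ⁅LinearMap.inl K L₁ L₂ x, LinearMap.inl K L₁ L₂ y⁆ := (LieHom.inl K L₁ L₂).map_lie x y
  simp only [LinearMap.comp_apply, LinearEquiv.coe_coe, hbracket, hD _ _, map_sub, map_smul,
    ridOfEquiv_sumActT, LinearMap.inl_apply]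

theorem comp_fst_mem_deltaDerSumTensor (ψ : V₂ ≃ₗ[K] K) {D : L₁ →ₗ[K] V₁}
    (hD : D ∈ deltaDer K L₁ V₁ δ) :
    (ridOfEquiv V₁ ψ).symm.toLinearMap ∘ₗ D ∘ₗ LinearMap.fst K L₁ L₂ ∈
      deltaDerSumTensor K L₁ L₂ V₁ V₂ δ := by
  intro x y
  simp only [LinearMap.comp_apply, LinearEquiv.coe_coe, LinearMap.fst_apply,
    LieAlgebra.Prod.bracket_apply, hD _ _, map_sub, map_smul, sumActT_ridOfEquiv_symm]

noncomputable def deltaDerSumTensorEquiv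
    (hL₂ : ⁅(⊤ : LieIdeal K L₂), (⊤ : LieIdeal K L₂)⁆ = ⊤) (ψ : V₂ ≃ₗ[K] K) :
    deltaDerSumTensor K L₁ L₂ V₁ V₂ δ ≃ₗ[K] deltaDer K L₁ V₁ δ where
  toFun D := ⟨_, comp_inl_mem_deltaDer ψ D.2⟩
  invFun D := ⟨_, comp_fst_mem_deltaDerSumTensor ψ D.2⟩
  map_add' _ _ := by ext; simp
  map_smul' _ _ := by ext; simp
  left_inv D := by
    have hinr := comp_inr_eq_zero_of_mem_deltaDerSumTensor hL₂ D.2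
    ext1
    apply LinearMap.prod_ext
    · ext; simp
    · ext y; simpa [Prod.mk_zero_zero] using (LinearMap.congr_fun hinr y).symm
  right_inv D := by ext; simp

end TrivialSecondFactor

theorem deltaDerSumTensor_equiv_deltaDer_general
    (K : Type*) [Field K] (L₁ L₂ : Type*) [LieRing L₁] [LieAlgebra K L₁]
    [LieRing L₂] [LieAlgebra K L₂]
    (hL₂ : ⁅(⊤ : LieIdeal K L₂), (⊤ : LieIdeal K L₂)⁆ = ⊤)
    (V₁ V₂ : Type*) [AddCommGroup V₁] [Module K V₁] [LieRingModule L₁ V₁] [LieModule K L₁ V₁]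
    [AddCommGroup V₂] [Module K V₂] [LieRingModule L₂ V₂] [LieModule K L₂ V₂]
    [LieModule.IsTrivial L₂ V₂] (hV₂ : Module.finrank K V₂ = 1)
    (δ : K) :
    Nonempty (↥(deltaDerSumTensor K L₁ L₂ V₁ V₂ δ) ≃ₗ[K] ↥(deltaDer K L₁ V₁ δ)) := by
  have : FiniteDimensional K V₂ := Module.finite_of_finrank_eq_succ hV₂
  exact ⟨deltaDerSumTensorEquiv hL₂ (LinearEquiv.ofFinrankEq V₂ K (by simp [hV₂]))⟩

/-- for perfect Lie algebras `L₁`, `L₂`, a nontrivial irreducible `L₁`-module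
`V₁`, a trivial one-dimensional `L₂`-module `V₂`, and `δ ≠ 1`, there is a linear isomorphism
`Der_δ(L₁ ⊕ L₂, V₁ ⊗ V₂) ≅ Der_δ(L₁, V₁)`. -/
theorem deltaDerSumTensor_equiv_deltaDer
    (K : Type*) [Field K] (L₁ L₂ : Type*) [LieRing L₁] [LieAlgebra K L₁]
    [LieRing L₂] [LieAlgebra K L₂]
    (hL₁ : ⁅(⊤ : LieIdeal K L₁), (⊤ : LieIdeal K L₁)⁆ = ⊤)
    (hL₂ : ⁅(⊤ : LieIdeal K L₂), (⊤ : LieIdeal K L₂)⁆ = ⊤)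
    (V₁ V₂ : Type*) [AddCommGroup V₁] [Module K V₁] [LieRingModule L₁ V₁] [LieModule K L₁ V₁]
    [AddCommGroup V₂] [Module K V₂] [LieRingModule L₂ V₂] [LieModule K L₂ V₂]
    [LieModule.IsIrreducible K L₁ V₁] (hV₁ : ¬ LieModule.IsTrivial L₁ V₁)
    [LieModule.IsTrivial L₂ V₂] (hV₂ : Module.finrank K V₂ = 1)
    (δ : K) (hδ : δ ≠ 1) :
    Nonempty (↥(deltaDerSumTensor K L₁ L₂ V₁ V₂ δ) ≃ₗ[K] ↥(deltaDer K L₁ V₁ δ)) :=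
  deltaDerSumTensor_equiv_deltaDer_general K L₁ L₂ hL₂ V₁ V₂ hV₂ δ
end

section
/- Let G be an abelian group, K a field, L a finite-dimensional Lie algebra over K with a G-grading, i.e. a family of subspaces (L_α)_{α∈G} such that L is the internal direct sum of the L_α and [L_α, L_β] ⊆ L_{α+β} for all α, β ∈ G, and let V be a finite-dimensional L-module with a compatible G-grading, i.e. a family of subspaces (V_α)_{α∈G} such that V is the internal direct sum of the V_α and L_α • V_β ⊆ V_{α+β} for all α, β ∈ G. For δ ∈ K and α ∈ G, let Der_δ^α(L,V) = {D ∈ Der_δ(L,V) : D(L_β) ⊆ V_{β−α} for all β ∈ G}. Then Der_δ(L,V) is the internal direct sum of the subspaces Der_δ^α(L,V), α ∈ G. -/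
/-- Given gradings `(Lgr α)` of `L` and `(Vgr α)` of `V` by an abelian group `G`, the space of
linear maps `D : L → V` of weight `α`, i.e. with `D (Lgr β) ⊆ Vgr (β - α)` for all `β`. -/
def weightMaps {K : Type*} [Field K] {L : Type*} [LieRing L] [LieAlgebra K L]
    {V : Type*} [AddCommGroup V] [Module K V] {G : Type*} [AddCommGroup G]
    (Lgr : G → Submodule K L) (Vgr : G → Submodule K V) (α : G) :
    Submodule K (L →ₗ[K] V) where
  carrier := {D | ∀ β : G, ∀ x ∈ Lgr β, D x ∈ Vgr (β - α)}
  zero_mem' := by intro β x _; simp only [LinearMap.zero_apply]; exact (Vgr (β - α)).zero_mem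
  add_mem' := by
    intro a b ha hb β x hx
    exact (Vgr (β - α)).add_mem (ha β x hx) (hb β x hx)
  smul_mem' := by
    intro c a ha β x hx
    exact (Vgr (β - α)).smul_mem c (ha β x hx)

open DirectSum Pointwise

section GradedProj

variable {ι R M : Type*} [DecidableEq ι] [Semiring R] [AddCommMonoid M] [Module R M]
  (ℳ : ι → Submodule R M) [Decomposition ℳ]

noncomputable def gradedProj (i : ι) : M →ₗ[R] M :=
  (ℳ i).subtype ∘ₗ component R ι (fun j => ℳ j) i ∘ₗ (decomposeLinearEquiv ℳ).toLinearMap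

theorem gradedProj_mem (i : ι) (m : M) : gradedProj ℳ i m ∈ ℳ i :=
  (decompose ℳ m i).2

theorem gradedProj_of_mem_same {i : ι} {m : M} (hm : m ∈ ℳ i) : gradedProj ℳ i m = m :=
  decompose_of_mem_same ℳ hm

theorem gradedProj_of_mem_ne {i j : ι} {m : M} (hm : m ∈ ℳ i) (hij : i ≠ j) :
    gradedProj ℳ j m = 0 :=
  decompose_of_mem_ne ℳ hm hij

theorem sum_gradedProj {s : Finset ι} (hs : ∀ i ∉ s, ℳ i = ⊥) (m : M) :
    ∑ i ∈ s, gradedProj ℳ i m = m := by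
  suffices ∑ i ∈ s, gradedProj ℳ i = LinearMap.id by
    rw [← LinearMap.sum_apply, this, LinearMap.id_apply]
  refine decompose_lhom_ext ℳ fun j => LinearMap.ext fun ⟨m, hm⟩ => ?_
  simp only [LinearMap.coe_comp, Function.comp_apply, Submodule.coe_subtype, LinearMap.sum_apply,
    LinearMap.id_apply]
  by_cases hj : j ∈ s
  · rw [Finset.sum_eq_single_of_mem j hj fun i _ hij => gradedProj_of_mem_ne ℳ hm hij.symm,
      gradedProj_of_mem_same ℳ hm]
  · rw [(Submodule.eq_bot_iff _).mp (hs j hj) m hm]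
    simp

theorem gradedProj_map_of_forall_mem {N : Type*} [AddCommMonoid N] [Module R N]
    [Add ι] [IsLeftCancelAdd ι] (𝒩 : ι → Submodule R N) [Decomposition 𝒩] (f : M →ₗ[R] N) {d : ι}
    (hf : ∀ i, ∀ m ∈ ℳ i, f m ∈ 𝒩 (d + i)) (i : ι) (m : M) :
    gradedProj 𝒩 (d + i) (f m) = f (gradedProj ℳ i m) := by
  suffices gradedProj 𝒩 (d + i) ∘ₗ f = f ∘ₗ gradedProj ℳ i from congr($this m)
  refine decompose_lhom_ext ℳ fun j => LinearMap.ext fun ⟨m, hm⟩ => ?_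
  simp only [LinearMap.coe_comp, Function.comp_apply, Submodule.coe_subtype]
  by_cases hj : j = i
  · subst hj
    rw [gradedProj_of_mem_same ℳ hm, gradedProj_of_mem_same 𝒩 (hf j m hm)]
  · rw [gradedProj_of_mem_ne ℳ hm hj, map_zero,
      gradedProj_of_mem_ne 𝒩 (hf j m hm) fun h => hj (add_left_cancel h)]

end GradedProj

section Projections

variable {ι R M : Type*} [Semiring R] [AddCommMonoid M] [Module R M] {W : ι → Submodule R M}

theorem iSupIndep_of_projections (π : ι → M →ₗ[R] M) (hid : ∀ i, ∀ m ∈ W i, π i m = m)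
    (hzero : ∀ i j, i ≠ j → ∀ m ∈ W j, π i m = 0) : iSupIndep W := by
  refine iSupIndep_def.mpr fun i => Submodule.disjoint_def.mpr fun m hmi hm => ?_
  have hker : ⨆ j, ⨆ _ : j ≠ i, W j ≤ LinearMap.ker (π i) :=
    iSup₂_le fun j hji m' hm' => hzero i j (Ne.symm hji) m' hm'
  rw [← hid i m hmi]
  exact hker hm

theorem iSup_inf_eq_of_projections (π : ι → M → M) (s : Finset ι) (hπ : ∀ i m, π i m ∈ W i)
    (hsum : ∀ m, ∑ i ∈ s, π i m = m) {p : Submodule R M} (hp : ∀ i, ∀ m ∈ p, π i m ∈ p) :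
    ⨆ i, p ⊓ W i = p := by
  refine le_antisymm (iSup_le fun i => inf_le_left) fun m hm => ?_
  rw [← hsum m]
  exact Submodule.sum_mem _ fun i _ => Submodule.mem_iSup_of_mem i ⟨hp i m hm, hπ i m⟩

end Projections

section WeightProj

variable {K G L V : Type*} [Field K] [AddCommGroup G] [DecidableEq G]
  [LieRing L] [LieAlgebra K L] [AddCommGroup V] [Module K V]
  (Lgr : G → Submodule K L) (Vgr : G → Submodule K V) [Decomposition Lgr] [Decomposition Vgr]

noncomputable def weightProj (α : G) : (L →ₗ[K] V) →ₗ[K] (L →ₗ[K] V) :=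
  LinearMap.lcomp K V (decomposeLinearEquiv Lgr).toLinearMap ∘ₗ (DFinsupp.lsum K).toLinearMap ∘ₗ
    LinearMap.pi fun β => LinearMap.llcomp K (Lgr β) V V (gradedProj Vgr (β - α)) ∘ₗ
      LinearMap.lcomp K V (Lgr β).subtype

theorem weightProj_apply_of_mem (α : G) (D : L →ₗ[K] V) {β : G} {x : L} (hx : x ∈ Lgr β) :
    weightProj Lgr Vgr α D x = gradedProj Vgr (β - α) (D x) := by
  simp only [weightProj, LinearMap.coe_comp, Function.comp_apply, LinearMap.lcomp_apply,
    LinearEquiv.coe_coe, decomposeLinearEquiv_apply_coe Lgr β ⟨x, hx⟩]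
  exact DFinsupp.lsum_single K (M := fun i => Lgr i) _ β ⟨x, hx⟩

theorem weightProj_mem (α : G) (D : L →ₗ[K] V) : weightProj Lgr Vgr α D ∈ weightMaps Lgr Vgr α :=
  fun _ _ hx => weightProj_apply_of_mem Lgr Vgr α D hx ▸ gradedProj_mem Vgr _ _

theorem weightProj_of_mem {α : G} {D : L →ₗ[K] V} (hD : D ∈ weightMaps Lgr Vgr α) :
    weightProj Lgr Vgr α D = D :=
  decompose_lhom_ext Lgr fun β => LinearMap.ext fun ⟨x, hx⟩ => by
    simp only [LinearMap.coe_comp, Function.comp_apply, Submodule.coe_subtype]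
    rw [weightProj_apply_of_mem Lgr Vgr α D hx, gradedProj_of_mem_same Vgr (hD β x hx)]

theorem weightProj_of_mem_ne {α α' : G} (h : α ≠ α') {D : L →ₗ[K] V}
    (hD : D ∈ weightMaps Lgr Vgr α') : weightProj Lgr Vgr α D = 0 :=
  decompose_lhom_ext Lgr fun β => LinearMap.ext fun ⟨x, hx⟩ => by
    simp only [LinearMap.coe_comp, Function.comp_apply, Submodule.coe_subtype,
      LinearMap.zero_apply]
    rw [weightProj_apply_of_mem Lgr Vgr α D hx,
      gradedProj_of_mem_ne Vgr (hD β x hx) fun e => h (sub_right_inj.mp e).symm]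

theorem sum_weightProj {S T : Finset G} (hS : ∀ β ∉ S, Lgr β = ⊥) (hT : ∀ γ ∉ T, Vgr γ = ⊥)
    (D : L →ₗ[K] V) : ∑ α ∈ S - T, weightProj Lgr Vgr α D = D := by
  refine decompose_lhom_ext Lgr fun β => LinearMap.ext fun ⟨x, hx⟩ => ?_
  simp only [LinearMap.coe_comp, Function.comp_apply, Submodule.coe_subtype, LinearMap.sum_apply]
  by_cases hβ : β ∈ S
  · have hT' : ∀ γ ∉ (S - T).image (β - ·), Vgr γ = ⊥ := fun γ hγ => hT γ fun hγT =>
      hγ (Finset.mem_image.mpr ⟨β - γ, Finset.sub_mem_sub hβ hγT, sub_sub_cancel β γ⟩)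
    calc ∑ α ∈ S - T, weightProj Lgr Vgr α D x
        = ∑ α ∈ S - T, gradedProj Vgr (β - α) (D x) :=
          Finset.sum_congr rfl fun α _ => weightProj_apply_of_mem Lgr Vgr α D hx
      _ = ∑ γ ∈ (S - T).image (β - ·), gradedProj Vgr γ (D x) :=
          (Finset.sum_image (f := fun γ => gradedProj Vgr γ (D x))
            fun _ _ _ _ h => sub_right_injective h).symm
      _ = D x := sum_gradedProj Vgr hT' (D x)
  · simp [(Submodule.eq_bot_iff _).mp (hS β hβ) x hx]

end WeightProj

theorem iSupIndep.exists_finset_forall_notMem_eq_bot {ι R M : Type*} [Semiring R]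
    [AddCommMonoid M] [Module R M] [IsNoetherian R M] {N : ι → Submodule R M} (h : iSupIndep N) :
    ∃ s : Finset ι, ∀ i ∉ s, N i = ⊥ :=
  ⟨(Submodule.finite_ne_bot_of_iSupIndep h).toFinset, fun i hi => by simpa using hi⟩

section Derivations

variable {K ι L V : Type*} [CommRing K] [DecidableEq ι] [LieRing L] [LieAlgebra K L]
  [AddCommGroup V] [Module K V] [LieRingModule L V] [LieModule K L V]

theorem mem_deltaDer_of_forall_homogeneous (Lgr : ι → Submodule K L) [Decomposition Lgr] {δ : K}
    {D : L →ₗ[K] V}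
    (h : ∀ i j, ∀ x ∈ Lgr i, ∀ y ∈ Lgr j, D ⁅x, y⁆ = δ • ⁅x, D y⁆ - δ • ⁅y, D x⁆) :
    D ∈ deltaDer K L V δ := by
  intro x y
  induction x using Decomposition.inductionOn Lgr with
  | zero => simp
  | homogeneous x =>
    induction y using Decomposition.inductionOn Lgr with
    | zero => simp
    | homogeneous y => exact h _ _ _ x.2 _ y.2
    | add y y' hy hy' =>
      simp only [lie_add, map_add, hy, hy', add_lie, smul_add]
      abel
  | add x x' hx hx' =>
    simp only [add_lie, map_add, hx, hx', lie_add, smul_add]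
    abel

end Derivations

theorem weightProj_mem_deltaDer {K G L V : Type*} [Field K] [AddCommGroup G] [DecidableEq G]
    [LieRing L] [LieAlgebra K L] [AddCommGroup V] [Module K V] [LieRingModule L V]
    [LieModule K L V] {Lgr : G → Submodule K L} {Vgr : G → Submodule K V}
    [Decomposition Lgr] [Decomposition Vgr]
    (hLb : ∀ β β' : G, ∀ x ∈ Lgr β, ∀ y ∈ Lgr β', ⁅x, y⁆ ∈ Lgr (β + β'))
    (hVb : ∀ β γ : G, ∀ x ∈ Lgr β, ∀ v ∈ Vgr γ, ⁅x, v⁆ ∈ Vgr (β + γ))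
    (α : G) {δ : K} {D : L →ₗ[K] V} (hD : D ∈ deltaDer K L V δ) :
    weightProj Lgr Vgr α D ∈ deltaDer K L V δ := by
  have hbracket : ∀ {β x}, x ∈ Lgr β → ∀ γ v,
      gradedProj Vgr (β + γ) ⁅x, v⁆ = ⁅x, gradedProj Vgr γ v⁆ := fun hx γ v =>
    gradedProj_map_of_forall_mem Vgr Vgr (LieModule.toEnd K L V _)
      (fun γ v hv => hVb _ γ _ hx v hv) γ v
  refine mem_deltaDer_of_forall_homogeneous Lgr fun β β' x hx y hy => ?_
  rw [weightProj_apply_of_mem Lgr Vgr α D (hLb β β' x hx y hy), hD x y,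
    weightProj_apply_of_mem Lgr Vgr α D hx, weightProj_apply_of_mem Lgr Vgr α D hy,
    map_sub, map_smul, map_smul, ← hbracket hx, ← hbracket hy,
    show β + (β' - α) = β + β' - α by abel, show β' + (β - α) = β + β' - α by abel]

/-- for a `G`-graded Lie algebra `L` and a compatibly `G`-graded `L`-module `V`,
the space `Der_δ(L,V)` is the internal direct sum of the subspaces `Der_δ^α(L,V)` of
`δ`-derivations of weight `α`, `α ∈ G`. -/
theorem deltaDer_internal_direct_sum_of_weights
    (K : Type*) [Field K] (G : Type*) [AddCommGroup G] [DecidableEq G]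
    (L : Type*) [LieRing L] [LieAlgebra K L] [FiniteDimensional K L]
    (V : Type*) [AddCommGroup V] [Module K V] [LieRingModule L V] [LieModule K L V]
    [FiniteDimensional K V]
    (Lgr : G → Submodule K L) (hL : DirectSum.IsInternal Lgr)
    (hLb : ∀ α β : G, ∀ x ∈ Lgr α, ∀ y ∈ Lgr β, ⁅x, y⁆ ∈ Lgr (α + β))
    (Vgr : G → Submodule K V) (hV : DirectSum.IsInternal Vgr)
    (hVb : ∀ α β : G, ∀ x ∈ Lgr α, ∀ v ∈ Vgr β, ⁅x, v⁆ ∈ Vgr (α + β))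
    (δ : K) :
    iSupIndep (fun α : G => deltaDer K L V δ ⊓ weightMaps Lgr Vgr α) ∧
      (⨆ α : G, deltaDer K L V δ ⊓ weightMaps Lgr Vgr α) = deltaDer K L V δ := by
  let := hL.chooseDecomposition
  let := hV.chooseDecomposition
  obtain ⟨S, hS⟩ := hL.submodule_iSupIndep.exists_finset_forall_notMem_eq_bot
  obtain ⟨T, hT⟩ := hV.submodule_iSupIndep.exists_finset_forall_notMem_eq_bot
  constructor
  · refine iSupIndep.mono ?_ fun α => inf_le_right
    exact iSupIndep_of_projections (weightProj Lgr Vgr) (fun _ _ => weightProj_of_mem Lgr Vgr)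
      fun _ _ h _ => weightProj_of_mem_ne Lgr Vgr h
  · exact iSup_inf_eq_of_projections (fun α => weightProj Lgr Vgr α) (S - T)
      (weightProj_mem Lgr Vgr) (sum_weightProj Lgr Vgr hS hT)
      fun α _ => weightProj_mem_deltaDer hLb hVb α
end

section
/- Let K be an algebraically closed field of characteristic 0, n ≥ 1 an integer, and V an irreducible sl(2,K)-module of dimension n+1. Then the space Der_{−2/n}(sl(2,K), V) of (−2/n)-derivations of sl(2,K) with values in V has dimension n+3. -/
open LieAlgebra LieModule Module Submodule LieAlgebra.SpecialLinear

/-!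
Write `V` in its standard basis `v₀, …, vₙ`: `h vⱼ = (n - 2j) vⱼ`, `f vⱼ = vⱼ₊₁`,
`e vⱼ₊₁ = (j + 1)(n - j) vⱼ`. A `δ`-derivation `D` is determined by `a = D e` and `b = D f`,
because `[e, f] = h` forces `D h = δ (e·b - f·a)`. In coordinates, the conditions coming from
`[h, e] = 2e` and `[h, f] = -2f` relate only `aⱼ` and `bⱼ₊₂`, and for `δ = -2/n` both reduce to the
`n - 1` independent equations `aⱼ + (j + 1)(j + 2) bⱼ₊₂ = 0` for `j ≤ n - 2`. Hence the
derivations form a space of dimension `2(n + 1) - (n - 1) = n + 3`.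
-/

section DeltaDerivation

variable {K L V : Type*} [CommRing K] [LieRing L] [LieAlgebra K L] [AddCommGroup V] [Module K V]
  [LieRingModule L V] [LieModule K L V] {δ : K} {D : L →ₗ[K] V}

lemma mem_deltaDer_iff_of_span_eq_top {s : Set L} (hs : span K s = ⊤) :
    D ∈ deltaDer K L V δ ↔ ∀ x ∈ s, ∀ y ∈ s, D ⁅x, y⁆ = δ • ⁅x, D y⁆ - δ • ⁅y, D x⁆ := by
  let B : L →ₗ[K] L →ₗ[K] V := LinearMap.mk₂ K (fun x y ↦ D ⁅x, y⁆ - (δ • ⁅x, D y⁆ - δ • ⁅y, D x⁆))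
    (fun x x' y ↦ by simp only [add_lie, lie_add, map_add, smul_add]; abel)
    (fun c x y ↦ by simp only [smul_lie, lie_smul, map_smul, smul_sub, smul_comm c δ])
    (fun x y y' ↦ by simp only [add_lie, lie_add, map_add, smul_add]; abel)
    (fun c x y ↦ by simp only [smul_lie, lie_smul, map_smul, smul_sub, smul_comm c δ])
  have hB (x y : L) : B x y = 0 ↔ D ⁅x, y⁆ = δ • ⁅x, D y⁆ - δ • ⁅y, D x⁆ := by
    rw [LinearMap.mk₂_apply, sub_eq_zero]
  refine ⟨fun hD x _ y _ ↦ hD x y, fun h x y ↦ (hB x y).mp ?_⟩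
  have hB0 : B = 0 := LinearMap.ext_on hs fun x hx ↦ LinearMap.ext_on hs fun y hy ↦
    (hB x y).mpr (h x hx y hy)
  rw [hB0, LinearMap.zero_apply, LinearMap.zero_apply]

lemma mem_deltaDer_iff_of_isSl2Triple {h e f : L} (t : IsSl2Triple h e f)
    (hs : span K {e, f, h} = ⊤) :
    D ∈ deltaDer K L V δ ↔ D h = δ • ⁅e, D f⁆ - δ • ⁅f, D e⁆ ∧
      2 • D e = δ • ⁅h, D e⁆ - δ • ⁅e, D h⁆ ∧ -(2 • D f) = δ • ⁅h, D f⁆ - δ • ⁅f, D h⁆ := by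
  have swap (x y : L) : D ⁅x, y⁆ = δ • ⁅x, D y⁆ - δ • ⁅y, D x⁆ ↔
      D ⁅y, x⁆ = δ • ⁅y, D x⁆ - δ • ⁅x, D y⁆ := by
    rw [← lie_skew x y, map_neg, neg_eq_iff_eq_neg, neg_sub]
  rw [mem_deltaDer_iff_of_span_eq_top hs]
  simp only [Set.mem_insert_iff, Set.mem_singleton_iff, forall_eq_or_imp, forall_eq]
  rw [swap e h, swap f e, swap f h]
  simp only [lie_self, map_zero, sub_self, t.lie_e_f, t.lie_h_e_nsmul, t.lie_h_f_nsmul, map_nsmul,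
    map_neg, true_and, and_true]
  tauto

end DeltaDerivation

section StandardBasis

variable {L V : Type*} [LieRing L] [AddCommGroup V] [LieRingModule L V]

structure IsStandardBasis (K : Type*) [Field K] [Module K V] (h e f : L) (n : ℕ) (v : ℕ → V) :
    Prop where
  linearIndependent : LinearIndependent K fun j : Fin (n + 1) ↦ v j
  span_eq_top : span K (Set.range v) = ⊤
  eq_zero_of_lt {j : ℕ} : n < j → v j = 0
  lie_h (j : ℕ) : ⁅h, v j⁆ = ((n : K) - 2 * j) • v j
  lie_e_zero : ⁅e, v 0⁆ = 0
  lie_e_succ (j : ℕ) : ⁅e, v (j + 1)⁆ = (((j : K) + 1) * ((n : K) - j)) • v j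
  lie_f (j : ℕ) : ⁅f, v j⁆ = v (j + 1)

variable {K : Type*} [Field K] [Module K V] {h e f : L}

namespace IsStandardBasis

variable {n : ℕ} {v : ℕ → V} (hv : IsStandardBasis K h e f n v)

noncomputable def basis : Basis (Fin (n + 1)) K V :=
  .mk hv.linearIndependent <| by
    rw [← hv.span_eq_top, span_le]
    rintro _ ⟨j, rfl⟩
    rcases le_or_gt j n with hjn | hjn
    · exact subset_span ⟨⟨j, Nat.lt_succ_of_le hjn⟩, rfl⟩
    · rw [hv.eq_zero_of_lt hjn]
      exact zero_mem _

lemma basis_apply (j : Fin (n + 1)) : hv.basis j = v j :=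
  Basis.mk_apply _ _ _

lemma finrank_eq (hv : IsStandardBasis K h e f n v) : finrank K V = n + 1 := by
  simp [finrank_eq_card_basis hv.basis]

noncomputable def coord (j : ℕ) : V →ₗ[K] K :=
  if hj : j ≤ n then hv.basis.coord ⟨j, Nat.lt_succ_of_le hj⟩ else 0

lemma coord_eq_zero_of_lt {j : ℕ} (hj : n < j) (x : V) : hv.coord j x = 0 := by
  simp [coord, hj.not_ge]

lemma coord_v (i j : ℕ) : hv.coord j (v i) = if j = i ∧ i ≤ n then 1 else 0 := by
  rcases le_or_gt i n with hi | hi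
  · have := hv.basis_apply ⟨i, Nat.lt_succ_of_le hi⟩
    unfold coord
    split_ifs with hj hji hji <;> simp_all [← this, Fin.ext_iff]
  · simp [hv.eq_zero_of_lt hi, hi.not_ge]

lemma eq_zero_iff {x : V} : x = 0 ↔ ∀ j, hv.coord j x = 0 := by
  refine ⟨fun hx j ↦ by simp [hx], fun hx ↦ hv.basis.forall_coord_eq_zero_iff.mp fun i ↦ ?_⟩
  simpa [coord, Nat.lt_succ_iff.mp i.isLt] using hx i

lemma exists_coord_eq (c : ℕ → K) : ∃ x, ∀ j ≤ n, hv.coord j x = c j :=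
  ⟨hv.basis.equivFun.symm fun i ↦ c i, fun j hj ↦ by
    rw [coord, dif_pos hj, Basis.coord_apply, ← Basis.equivFun_apply, LinearEquiv.apply_symm_apply]⟩

lemma linearMap_ext (hv : IsStandardBasis K h e f n v) {M : Type*} [AddCommGroup M] [Module K M]
    {φ ψ : V →ₗ[K] M}
    (H : ∀ i ≤ n, φ (v i) = ψ (v i)) : φ = ψ :=
  hv.basis.ext fun i ↦ by simpa [basis_apply] using H i (Nat.lt_succ_iff.mp i.isLt)

lemma coord_apply_of_forall_eq_smul {T : V →ₗ[K] V} {μ : ℕ → K} (hT : ∀ i, T (v i) = μ i • v i)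
    (j : ℕ) (x : V) : hv.coord j (T x) = μ j * hv.coord j x := by
  refine LinearMap.congr_fun
    (hv.linearMap_ext (φ := hv.coord j ∘ₗ T) (ψ := μ j • hv.coord j) fun i _ ↦ ?_) x
  simp only [LinearMap.comp_apply, hT, map_smul, coord_v, LinearMap.smul_apply, smul_eq_mul]
  rcases eq_or_ne j i with rfl | hji
  · rfl
  · simp [hji]

variable [LieAlgebra K L] [LieModule K L V]

lemma coord_lie_h (j : ℕ) (x : V) : hv.coord j ⁅h, x⁆ = ((n : K) - 2 * j) * hv.coord j x :=
  hv.coord_apply_of_forall_eq_smul (T := toEnd K L V h) hv.lie_h j x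

lemma coord_lie_e (j : ℕ) (x : V) :
    hv.coord j ⁅e, x⁆ = ((j + 1) * ((n : K) - j)) * hv.coord (j + 1) x := by
  refine LinearMap.congr_fun (hv.linearMap_ext (φ := hv.coord j ∘ₗ toEnd K L V e)
    (ψ := (((j : K) + 1) * ((n : K) - j)) • hv.coord (j + 1)) fun i hi ↦ ?_) x
  cases i with
  | zero => simp [hv.lie_e_zero, coord_v]
  | succ i =>
    simp only [LinearMap.comp_apply, toEnd_apply_apply, hv.lie_e_succ, map_smul, coord_v,
      LinearMap.smul_apply, smul_eq_mul, hi, (Nat.le_of_succ_le hi), and_true, add_left_inj]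
    rcases eq_or_ne j i with rfl | hji
    · rfl
    · simp [hji]

lemma coord_succ_lie_f {j : ℕ} (hj : j < n) (x : V) :
    hv.coord (j + 1) ⁅f, x⁆ = hv.coord j x := by
  refine LinearMap.congr_fun (hv.linearMap_ext (φ := hv.coord (j + 1) ∘ₗ toEnd K L V f)
    (ψ := hv.coord j) fun i hi ↦ ?_) x
  simp only [LinearMap.comp_apply, toEnd_apply_apply, hv.lie_f, coord_v, add_left_inj]
  rcases eq_or_ne j i with rfl | hji
  · simp [hj, hi]
  · simp [hji]

lemma coord_zero_lie_f (x : V) : hv.coord 0 ⁅f, x⁆ = 0 := by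
  refine LinearMap.congr_fun
    (hv.linearMap_ext (φ := hv.coord 0 ∘ₗ toEnd K L V f) (ψ := 0) fun i _ ↦ ?_) x
  simp [hv.lie_f, coord_v]

lemma coord_lie_e_lie_f (j : ℕ) (x : V) :
    hv.coord j ⁅e, ⁅f, x⁆⁆ = ((j + 1) * ((n : K) - j)) * hv.coord j x :=
  hv.coord_apply_of_forall_eq_smul (T := toEnd K L V e ∘ₗ toEnd K L V f)
    (μ := fun i ↦ ((i : K) + 1) * ((n : K) - i))
    (fun i ↦ by simp [hv.lie_f, hv.lie_e_succ]) j x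

lemma coord_lie_f_lie_e (j : ℕ) (x : V) :
    hv.coord j ⁅f, ⁅e, x⁆⁆ = (j * ((n : K) - j + 1)) * hv.coord j x :=
  hv.coord_apply_of_forall_eq_smul (T := toEnd K L V f ∘ₗ toEnd K L V e)
    (μ := fun i ↦ (i : K) * ((n : K) - i + 1)) (fun i ↦ by
      cases i with
      | zero => simp [hv.lie_e_zero]
      | succ i =>
        rw [LinearMap.comp_apply, toEnd_apply_apply, toEnd_apply_apply, hv.lie_e_succ, lie_smul,
          hv.lie_f]
        congr 1
        push_cast
        ring) j x

end IsStandardBasis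

variable [LieAlgebra K L] [LieModule K L V] {t : IsSl2Triple h e f}

lemma IsSl2Triple.HasPrimitiveVectorWith.span_range_pow_toEnd_f_eq_top [IsIrreducible K L V]
    (hs : span K {e, f, h} = ⊤) {m : V} {μ : K} (P : t.HasPrimitiveVectorWith m μ) :
    span K (Set.range fun j : ℕ ↦ (toEnd K L V f ^ j) m) = ⊤ := by
  set S := span K (Set.range fun j : ℕ ↦ (toEnd K L V f ^ j) m)
  have mem (j : ℕ) : (toEnd K L V f ^ j) m ∈ S := subset_span ⟨j, rfl⟩
  have hS : map₂ (toEnd K L V : L →ₗ[K] Module.End K V) ⊤ S ≤ S := by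
    rw [← hs, map₂_span_span, span_le]
    rintro _ ⟨y, hy, _, ⟨j, rfl⟩, rfl⟩
    rcases hy with rfl | rfl | rfl
    · cases j with
      | zero => simp [P.lie_e]
      | succ j => simpa [P.lie_e_pow_succ_toEnd_f] using S.smul_mem _ (mem j)
    · simpa [P.lie_f_pow_toEnd_f] using mem (j + 1)
    · simpa [P.lie_h_pow_toEnd_f] using S.smul_mem _ (mem j)
  let N : LieSubmodule K L V :=
    { S with lie_mem := fun {x w} hw ↦ hS (apply_mem_map₂ _ (mem_top (x := x)) hw) }
  have hN : N ≠ ⊥ := by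
    have hm : m ∈ N := (by simpa only [pow_zero, Module.End.one_apply] using mem 0 : m ∈ S)
    exact fun hN ↦ P.ne_zero (by rwa [hN, LieSubmodule.mem_bot] at hm)
  exact congrArg LieSubmodule.toSubmodule ((IsSimpleOrder.eq_bot_or_eq_top N).resolve_left hN)

lemma IsSl2Triple.exists_isStandardBasis [IsAlgClosed K] [CharZero K] [FiniteDimensional K V]
    [IsIrreducible K L V] (t : IsSl2Triple h e f) (hs : span K {e, f, h} = ⊤) :
    ∃ (n : ℕ) (v : ℕ → V), IsStandardBasis K h e f n v := by
  have := nontrivial_of_isIrreducible K L V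
  obtain ⟨μ, m, -, P⟩ := t.exists_hasPrimitiveVectorWith (R := K) (M := V)
  obtain ⟨n, rfl⟩ := P.exists_nat
  have hinj : Function.Injective fun j : Fin (n + 1) ↦ (n : K) - 2 * (j : ℕ) := fun i j hij ↦
    Fin.ext (by simpa using hij)
  refine ⟨n, fun j ↦ (toEnd K L V f ^ j) m,
    { linearIndependent := Module.End.eigenvectors_linearIndependent' (toEnd K L V h) _ hinj _
        fun j ↦ ⟨Module.End.mem_eigenspace_iff.mpr (P.lie_h_pow_toEnd_f j),
          P.pow_toEnd_f_ne_zero_of_eq_nat rfl (Nat.lt_succ_iff.mp j.isLt)⟩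
      span_eq_top := P.span_range_pow_toEnd_f_eq_top hs
      eq_zero_of_lt := fun {j} hj ↦ ?_
      lie_h := P.lie_h_pow_toEnd_f
      lie_e_zero := by simpa using P.lie_e
      lie_e_succ := P.lie_e_pow_succ_toEnd_f
      lie_f := P.lie_f_pow_toEnd_f }⟩
  obtain ⟨k, rfl⟩ := Nat.exists_eq_add_of_lt hj
  rw [show n + k + 1 = k + (n + 1) by omega, pow_add, Module.End.mul_apply,
    P.pow_toEnd_f_eq_zero_of_eq_nat rfl, map_zero]

end StandardBasis

namespace Sl2

variable (K : Type*) [CommRing K]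

def E : sl (Fin 2) K := single 0 1 (by decide) 1
def F : sl (Fin 2) K := single 1 0 (by decide) 1
def H : sl (Fin 2) K := singleSubSingle 0 1 1

lemma val_E : (E K).val = !![0, 1; 0, 0] := by
  ext i j; fin_cases i <;> fin_cases j <;> simp [E, Matrix.single]

lemma val_F : (F K).val = !![0, 0; 1, 0] := by
  ext i j; fin_cases i <;> fin_cases j <;> simp [F, Matrix.single]

lemma val_H : (H K).val = !![1, 0; 0, -1] := by
  ext i j; fin_cases i <;> fin_cases j <;> simp [H, Matrix.single]

lemma lie_E_F : ⁅E K, F K⁆ = H K := by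
  ext : 1; simp [LieRing.of_associative_ring_bracket, val_E, val_F, val_H]

lemma lie_H_E : ⁅H K, E K⁆ = 2 • E K := by
  ext : 1; simp [LieRing.of_associative_ring_bracket, val_E, val_H]; norm_num

lemma lie_H_F : ⁅H K, F K⁆ = -(2 • F K) := by
  ext i j : 2
  fin_cases i <;> fin_cases j <;> simp [LieRing.of_associative_ring_bracket, val_F, val_H]; norm_num

lemma isSl2Triple [Nontrivial K] : IsSl2Triple (H K) (E K) (F K) where
  h_ne_zero h := by simpa [val_H] using congr_arg (·.val 0 0) h
  lie_e_f := lie_E_F K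
  lie_h_e_nsmul := lie_H_E K
  lie_h_f_nsmul := lie_H_F K

lemma eq_smul_E_add_smul_F_add_smul_H (x : sl (Fin 2) K) :
    x = x.val 0 1 • E K + x.val 1 0 • F K + x.val 0 0 • H K := by
  have htr : x.val 0 0 + x.val 1 1 = 0 := by
    simpa [Matrix.trace_fin_two] using (LinearMap.mem_ker.mp x.property)
  ext i j
  fin_cases i <;> fin_cases j <;> simp [val_E, val_F, val_H]; linear_combination htr

lemma span_E_F_H : span K {E K, F K, H K} = ⊤ :=
  eq_top_iff'.mpr fun x ↦ mem_span_triple.mpr ⟨_, _, _, (eq_smul_E_add_smul_F_add_smul_H K x).symm⟩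

lemma linearIndependent_E_F_H [Nontrivial K] : LinearIndependent K ![E K, F K, H K] := by
  refine Fintype.linearIndependent_iff.mpr fun c hc i ↦ ?_
  have := fun i j ↦ congr_arg (fun x : sl (Fin 2) K ↦ x.val i j) hc
  fin_cases i
  · simpa [Fin.sum_univ_three, val_E, val_F, val_H] using this 0 1
  · simpa [Fin.sum_univ_three, val_E, val_F, val_H] using this 1 0
  · simpa [Fin.sum_univ_three, val_E, val_F, val_H] using this 0 0

noncomputable def basis [Nontrivial K] : Basis (Fin 3) K (sl (Fin 2) K) :=
  .mk (linearIndependent_E_F_H K) <| by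
    rw [Matrix.range_cons, Matrix.range_cons, Matrix.range_cons_empty, Set.singleton_union,
      Set.singleton_union, span_E_F_H]

section Derivations

variable {K V : Type*} [Field K] [AddCommGroup V] [Module K V] [LieRingModule (sl (Fin 2) K) V]
  {n : ℕ} {v : ℕ → V} (hv : IsStandardBasis K (H K) (E K) (F K) n v)

noncomputable def constraints : V × V →ₗ[K] Fin (n - 1) → K :=
  LinearMap.pi fun j ↦ hv.coord j ∘ₗ LinearMap.fst K V V +
    ((((j : ℕ) : K) + 1) * ((j : ℕ) + 2)) • hv.coord (j + 2) ∘ₗ LinearMap.snd K V V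

lemma mem_ker_constraints {a b : V} : (a, b) ∈ LinearMap.ker (constraints hv) ↔
    ∀ j, j + 2 ≤ n → hv.coord j a + (j + 1) * (j + 2) * hv.coord (j + 2) b = 0 := by
  simp only [constraints, LinearMap.mem_ker, funext_iff, LinearMap.pi_apply, LinearMap.add_apply,
    LinearMap.coe_comp, LinearMap.coe_fst, Function.comp_apply, LinearMap.smul_apply,
    LinearMap.coe_snd, smul_eq_mul, Pi.zero_apply, Fin.forall_iff]
  exact forall_congr' fun j ↦ ⟨fun H hj ↦ H (by omega), fun H hj ↦ H (by omega)⟩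

lemma constraints_surjective : Function.Surjective (constraints hv) := by
  intro g
  obtain ⟨x, hx⟩ := hv.exists_coord_eq fun j ↦ if hj : j < n - 1 then g ⟨j, hj⟩ else 0
  refine ⟨(x, 0), funext fun j ↦ ?_⟩
  simp [constraints, hx j (by omega)]

variable [LieModule K (sl (Fin 2) K) V]

lemma coord_lie_H_E_equation {δ : K} (hδ : δ * n = -2) (a b : V) (j : ℕ) :
    hv.coord j (δ • ⁅H K, a⁆ - δ • ⁅E K, δ • ⁅E K, b⁆ - δ • ⁅F K, a⁆⁆ - 2 • a) =
      -(δ ^ 2 * ((n - j) * (n - j - 1))) *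
        (hv.coord j a + (j + 1) * (j + 2) * hv.coord (j + 2) b) := by
  simp only [map_sub, map_smul, map_nsmul, lie_sub, lie_smul, smul_eq_mul, nsmul_eq_mul,
    hv.coord_lie_h, hv.coord_lie_e_lie_f]
  simp only [hv.coord_lie_e]
  push_cast
  linear_combination (δ * (n - j) - 1) * hv.coord j a * hδ

lemma coord_lie_H_F_equation {δ : K} (hδ : δ * n = -2) (a b : V) (j : ℕ) :
    hv.coord j (δ • ⁅H K, b⁆ - δ • ⁅F K, δ • ⁅E K, b⁆ - δ • ⁅F K, a⁆⁆ + 2 • b) =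
      δ ^ 2 * (j * (j - 1) * hv.coord j b + hv.coord j ⁅F K, ⁅F K, a⁆⁆) := by
  simp only [map_sub, map_add, map_smul, map_nsmul, lie_sub, lie_smul, smul_eq_mul, nsmul_eq_mul,
    hv.coord_lie_h, hv.coord_lie_f_lie_e]
  linear_combination (1 - j * δ) * hv.coord j b * hδ

lemma lie_H_E_equation_iff [CharZero K] {δ : K} (hδ : δ * n = -2) (a b : V) :
    2 • a = δ • ⁅H K, a⁆ - δ • ⁅E K, δ • ⁅E K, b⁆ - δ • ⁅F K, a⁆⁆ ↔
      ∀ j, j + 2 ≤ n → hv.coord j a + (j + 1) * (j + 2) * hv.coord (j + 2) b = 0 := by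
  have hδ₀ : δ ≠ 0 := by rintro rfl; norm_num at hδ
  rw [eq_comm, ← sub_eq_zero, hv.eq_zero_iff]
  simp only [coord_lie_H_E_equation hv hδ, neg_mul, neg_eq_zero, mul_eq_zero,
    pow_eq_zero_iff two_ne_zero, hδ₀, false_or]
  refine ⟨fun H j hj ↦ (H j).resolve_left ?_, fun H j ↦ ?_⟩
  · have h₁ : (n : K) - j ≠ 0 := sub_ne_zero.mpr (by exact_mod_cast (by omega : n ≠ j))
    have h₂ : (n : K) - j - 1 ≠ 0 := by
      rw [sub_sub]
      exact sub_ne_zero.mpr (by exact_mod_cast (by omega : n ≠ j + 1))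
    tauto
  · rcases le_or_gt (j + 2) n with hj | hj
    · exact Or.inr (H j hj)
    · rcases (by omega : j = n ∨ j + 1 = n ∨ n < j) with rfl | rfl | hj
      · simp
      · left; right; push_cast; ring
      · simp [hv.coord_eq_zero_of_lt hj, hv.coord_eq_zero_of_lt (by omega : n < j + 2)]

lemma lie_H_F_equation_of_coord [CharZero K] {δ : K} (hδ : δ * n = -2) {a b : V}
    (hab : ∀ j, j + 2 ≤ n → hv.coord j a + (j + 1) * (j + 2) * hv.coord (j + 2) b = 0) :
    -(2 • b) = δ • ⁅H K, b⁆ - δ • ⁅F K, δ • ⁅E K, b⁆ - δ • ⁅F K, a⁆⁆ := by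
  have hn : 0 < n := Nat.pos_of_ne_zero (by rintro rfl; norm_num at hδ)
  rw [eq_comm, ← sub_eq_zero, sub_neg_eq_add, hv.eq_zero_iff]
  intro j
  rw [coord_lie_H_F_equation hv hδ]
  match j with
  | 0 => simp [hv.coord_zero_lie_f]
  | 1 => simp [hv.coord_succ_lie_f hn, hv.coord_zero_lie_f]
  | j + 2 =>
    rcases le_or_gt (j + 2) n with hj | hj
    · rw [hv.coord_succ_lie_f (by omega), hv.coord_succ_lie_f (by omega),
        eq_neg_of_add_eq_zero_left (hab j hj)]
      push_cast
      ring
    · rw [hv.coord_eq_zero_of_lt hj, hv.coord_eq_zero_of_lt hj]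
      ring

variable (V) in
def evalEF (δ : K) : deltaDer K (sl (Fin 2) K) V δ →ₗ[K] V × V :=
  (LinearMap.applyₗ (E K)).prod (LinearMap.applyₗ (F K)) ∘ₗ (deltaDer K _ V δ).subtype

lemma evalEF_injective (δ : K) : Function.Injective (evalEF V δ) := by
  refine (injective_iff_map_eq_zero _).mpr fun ⟨D, hD⟩ h₀ ↦ ?_
  obtain ⟨hE, hF⟩ : D (E K) = 0 ∧ D (F K) = 0 := Prod.ext_iff.mp h₀
  have hH : D (H K) = 0 := by
    rw [((mem_deltaDer_iff_of_isSl2Triple (isSl2Triple K) (span_E_F_H K)).mp hD).1, hE, hF]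
    simp
  ext1
  refine LinearMap.ext_on (span_E_F_H K) ?_
  rintro x (rfl | rfl | rfl) <;> assumption

lemma range_evalEF [CharZero K] {δ : K} (hδ : δ * n = -2) :
    LinearMap.range (evalEF V δ) = LinearMap.ker (constraints hv) := by
  ext ⟨a, b⟩
  rw [mem_ker_constraints, ← lie_H_E_equation_iff hv hδ]
  constructor
  · rintro ⟨⟨D, hD⟩, hDab⟩
    obtain ⟨rfl, rfl⟩ := Prod.mk.inj hDab
    obtain ⟨hH, hE, -⟩ := (mem_deltaDer_iff_of_isSl2Triple (isSl2Triple K) (span_E_F_H K)).mp hD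
    rw [hH] at hE
    exact hE
  · intro hab
    let D := (basis K).constr K ![a, b, δ • ⁅E K, b⁆ - δ • ⁅F K, a⁆]
    have hD (i : Fin 3) : D (![E K, F K, H K] i) = ![a, b, δ • ⁅E K, b⁆ - δ • ⁅F K, a⁆] i := by
      rw [← Basis.mk_apply (linearIndependent_E_F_H K)]
      exact (basis K).constr_basis K _ i
    have hDE : D (E K) = a := hD 0
    have hDF : D (F K) = b := hD 1
    have hDH : D (H K) = δ • ⁅E K, b⁆ - δ • ⁅F K, a⁆ := hD 2
    have hD : D ∈ deltaDer K (sl (Fin 2) K) V δ := by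
      rw [mem_deltaDer_iff_of_isSl2Triple (isSl2Triple K) (span_E_F_H K), hDE, hDF, hDH]
      exact ⟨rfl, hab, lie_H_F_equation_of_coord hv hδ ((lie_H_E_equation_iff hv hδ a b).mp hab)⟩
    exact ⟨⟨D, hD⟩, Prod.ext hDE hDF⟩

lemma finrank_deltaDer (hv : IsStandardBasis K (H K) (E K) (F K) n v) [CharZero K] {δ : K}
    (hδ : δ * n = -2) :
    finrank K (deltaDer K (sl (Fin 2) K) V δ) = n + 3 := by
  have : FiniteDimensional K V := .of_basis hv.basis
  have hn : n ≠ 0 := by rintro rfl; norm_num at hδ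
  have key := (constraints hv).finrank_range_add_finrank_ker
  rw [LinearMap.range_eq_top.mpr (constraints_surjective hv), finrank_top, finrank_fin_fun,
    ← range_evalEF hv hδ, LinearMap.finrank_range_of_inj (evalEF_injective δ), finrank_prod,
    hv.finrank_eq] at key
  omega

end Derivations

end Sl2

/-- for an irreducible `(n+1)`-dimensional module `V` over `sl(2,K)` (`K`
algebraically closed of characteristic zero, `n ≥ 1`), the space of `(-2/n)`-derivations has
dimension `n+3`. -/
theorem deltaDer_sl2_neg_two_div_n
    (K : Type*) [Field K] [IsAlgClosed K] [CharZero K]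
    (n : ℕ) (hn : 1 ≤ n)
    (V : Type*) [AddCommGroup V] [Module K V]
    [LieRingModule (LieAlgebra.SpecialLinear.sl (Fin 2) K) V]
    [LieModule K (LieAlgebra.SpecialLinear.sl (Fin 2) K) V]
    [LieModule.IsIrreducible K (LieAlgebra.SpecialLinear.sl (Fin 2) K) V]
    (hdim : Module.finrank K V = n + 1) :
    Module.finrank K
      ↥(deltaDer K (LieAlgebra.SpecialLinear.sl (Fin 2) K) V (-2 / (n : K))) = n + 3 := by
  have : FiniteDimensional K V := .of_finrank_pos (by omega)
  obtain ⟨m, v, hv⟩ := (Sl2.isSl2Triple K).exists_isStandardBasis (V := V) (Sl2.span_E_F_H K)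
  obtain rfl : m = n := by have := hv.finrank_eq; omega
  exact Sl2.finrank_deltaDer hv (div_mul_cancel₀ _ (Nat.cast_ne_zero.mpr (by omega)))
end

section
/- Let K be an algebraically closed field of characteristic 0, n ≥ 1 an integer, V an irreducible sl(2,K)-module of dimension n+1, and δ ∈ K. If δ ≠ 1, δ ≠ −2/n, and δ ≠ 2/(n+2), then every δ-derivation of sl(2,K) with values in V is zero, i.e. Der_δ(sl(2,K), V) = 0. -/
open LieModule Submodule

section

variable {K L V : Type*} [Field K] [LieRing L] [LieAlgebra K L]
  [AddCommGroup V] [Module K V] [LieRingModule L V] [LieModule K L V]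

theorem Submodule.lie_mem_of_span_eq_top {S : Set L} (hS : span K S = ⊤) {W : Submodule K V}
    (hW : ∀ x ∈ S, ∀ w ∈ W, ⁅x, w⁆ ∈ W) (x : L) {w : V} (hw : w ∈ W) : ⁅x, w⁆ ∈ W := by
  have hx : x ∈ span K S := hS ▸ mem_top
  induction hx using span_induction with
  | mem x hx => exact hW x hx w hw
  | zero => simp
  | add x y _ _ hx hy => simpa only [add_lie] using add_mem hx hy
  | smul c x _ hx => simpa only [smul_lie] using smul_mem _ c hx

variable (K V) in
def sl2Casimir (h e f : L) : Module.End K V :=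
  (2 : K) • (toEnd K L V e * toEnd K L V f + toEnd K L V f * toEnd K L V e) +
    toEnd K L V h * toEnd K L V h

theorem sl2Casimir_apply (h e f : L) (z : V) :
    sl2Casimir K V h e f z = (2 : K) • ⁅e, ⁅f, z⁆⁆ + (2 : K) • ⁅f, ⁅e, z⁆⁆ + ⁅h, ⁅h, z⁆⁆ := by
  simp [sl2Casimir, smul_add]

theorem sl2Casimir_apply_of_eq_smul {h e f : L} {κ : K} (hΩ : sl2Casimir K V h e f = κ • 1)
    (z : V) : (2 : K) • ⁅e, ⁅f, z⁆⁆ + (2 : K) • ⁅f, ⁅e, z⁆⁆ + ⁅h, ⁅h, z⁆⁆ = κ • z := by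
  rw [← sl2Casimir_apply, hΩ, LinearMap.smul_apply, Module.End.one_apply]

theorem sl2Casimir_neg_swap (h e f : L) : sl2Casimir K V (-h) f e = sl2Casimir K V h e f := by
  simp [sl2Casimir, add_comm]

namespace IsSl2Triple

variable {h e f : L} (t : IsSl2Triple h e f)
include t

theorem lie_h_lie_e (z : V) : ⁅h, ⁅e, z⁆⁆ = 2 • ⁅e, z⁆ + ⁅e, ⁅h, z⁆⁆ := by
  rw [leibniz_lie, t.lie_h_e_nsmul, nsmul_lie]

theorem lie_h_lie_f (z : V) : ⁅h, ⁅f, z⁆⁆ = -(2 • ⁅f, z⁆) + ⁅f, ⁅h, z⁆⁆ := by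
  rw [leibniz_lie, t.lie_h_f_nsmul, neg_lie, nsmul_lie]

theorem lie_h_eq_lie_e_lie_f_sub (z : V) : ⁅h, z⁆ = ⁅e, ⁅f, z⁆⁆ - ⁅f, ⁅e, z⁆⁆ := by
  rw [← lie_lie, t.lie_e_f]

namespace HasPrimitiveVectorWith

variable [CharZero K] {t} {m : V}

theorem sl2Casimir_pow_toEnd_f {μ : K} (P : t.HasPrimitiveVectorWith m μ) (i : ℕ) :
    sl2Casimir K V h e f ((toEnd K L V f ^ i) m) = (μ * (μ + 2)) • (toEnd K L V f ^ i) m := by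
  have hef : ⁅e, ⁅f, (toEnd K L V f ^ i) m⁆⁆ = ((i + 1) * (μ - i)) • (toEnd K L V f ^ i) m := by
    rw [P.lie_f_pow_toEnd_f, P.lie_e_pow_succ_toEnd_f]
  have hfe : ⁅f, ⁅e, (toEnd K L V f ^ i) m⁆⁆ = (i * (μ - i + 1)) • (toEnd K L V f ^ i) m := by
    rcases i with _ | i
    · simp [P.lie_e]
    · rw [P.lie_e_pow_succ_toEnd_f, lie_smul, P.lie_f_pow_toEnd_f]
      congr 1
      push_cast
      ring
  rw [sl2Casimir_apply, hef, hfe, P.lie_h_pow_toEnd_f, lie_smul, P.lie_h_pow_toEnd_f, smul_smul,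
    smul_smul, smul_smul, ← add_smul, ← add_smul]
  congr 1
  ring

variable {N : ℕ} (P : t.HasPrimitiveVectorWith m (N : K))
include P

theorem linearIndependent_pow_toEnd_f :
    LinearIndependent K fun i : Fin (N + 1) => (toEnd K L V f ^ (i : ℕ)) m :=
  (toEnd K L V h).eigenvectors_linearIndependent' (fun i : Fin (N + 1) => (N : K) - 2 * i)
    (fun i j hij => Fin.ext (by simpa using hij)) _
    fun i => ⟨Module.End.mem_eigenspace_iff.mpr (P.lie_h_pow_toEnd_f i),
      P.pow_toEnd_f_ne_zero_of_eq_nat rfl i.is_le⟩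

theorem span_pow_toEnd_f_eq_top [FiniteDimensional K V] [IsIrreducible K L V]
    (hS : span K {e, f, h} = ⊤) :
    span K (Set.range fun i : Fin (N + 1) => (toEnd K L V f ^ (i : ℕ)) m) = ⊤ := by
  set W := span K (Set.range fun i : Fin (N + 1) => (toEnd K L V f ^ (i : ℕ)) m)
  have hmem (i : ℕ) (hi : i ≤ N) : (toEnd K L V f ^ i) m ∈ W :=
    subset_span ⟨⟨i, Nat.lt_succ_of_le hi⟩, rfl⟩
  have hW : ∀ x ∈ ({e, f, h} : Set L), ∀ w ∈ W, ⁅x, w⁆ ∈ W := by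
    intro x hx w hw
    induction hw using span_induction with
    | mem w hw =>
      obtain ⟨⟨i, hi⟩, rfl⟩ := hw
      rcases hx with rfl | rfl | rfl
      · rcases i with _ | i
        · simp [P.lie_e]
        · rw [P.lie_e_pow_succ_toEnd_f]
          exact smul_mem _ _ (hmem i (by omega))
      · rw [P.lie_f_pow_toEnd_f]
        rcases (Nat.lt_succ_iff.mp hi).lt_or_eq with hi | rfl
        · exact hmem _ hi
        · simp [P.pow_toEnd_f_eq_zero_of_eq_nat rfl]
      · rw [P.lie_h_pow_toEnd_f]
        exact smul_mem _ _ (hmem i (by omega))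
    | zero => simp
    | add u v _ _ hu hv => simpa only [lie_add] using add_mem hu hv
    | smul c u _ hu => simpa only [lie_smul] using smul_mem _ c hu
  let W' : LieSubmodule K L V := { W with lie_mem := lie_mem_of_span_eq_top hS hW _ }
  have hm : m ∈ W' := (by simpa using hmem 0 N.zero_le : m ∈ W)
  have hW' : W' ≠ ⊥ := fun h0 => P.ne_zero <| (LieSubmodule.mem_bot m).mp (h0 ▸ hm)
  simpa [W'] using
    congr_arg LieSubmodule.toSubmodule ((IsSimpleOrder.eq_bot_or_eq_top W').resolve_left hW')

end HasPrimitiveVectorWith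

theorem sl2Casimir_eq_smul_of_finrank_eq [CharZero K] [IsAlgClosed K] [IsIrreducible K L V]
    (hS : span K {e, f, h} = ⊤) {n : ℕ} (hV : Module.finrank K V = n + 1) :
    sl2Casimir K V h e f = ((n : K) * (n + 2)) • 1 := by
  have : FiniteDimensional K V := Module.finite_of_finrank_pos (by omega)
  have : Nontrivial V := Module.nontrivial_of_finrank_pos (R := K) (by omega)
  obtain ⟨μ, m, -, P⟩ := t.exists_hasPrimitiveVectorWith (R := K) (M := V)
  obtain ⟨N, rfl⟩ := P.exists_nat
  have hspan := P.span_pow_toEnd_f_eq_top hS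
  obtain rfl : N = n := by
    rw [← finrank_top, ← hspan, finrank_span_eq_card P.linearIndependent_pow_toEnd_f,
      Fintype.card_fin] at hV
    omega
  refine LinearMap.ext_on_range hspan fun i => ?_
  simp [P.sl2Casimir_pow_toEnd_f]

variable {δ : K} {D : L →ₗ[K] V}

theorem smul_lie_h_deltaDer_e (hD : D ∈ deltaDer K L V δ) :
    δ • ⁅h, D e⁆ = (2 : K) • D e + δ • ⁅e, D h⁆ := by
  have := hD h e
  rw [t.lie_h_e_smul K, map_smul] at this
  linear_combination (norm := module) -this

theorem smul_lie_h_deltaDer_f (hD : D ∈ deltaDer K L V δ) :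
    δ • ⁅h, D f⁆ = δ • ⁅f, D h⁆ - (2 : K) • D f := by
  have := hD h f
  rw [t.lie_lie_smul_f K, map_neg, map_smul] at this
  linear_combination (norm := module) -this

theorem deltaDer_h_eq (hD : D ∈ deltaDer K L V δ) : D h = δ • ⁅e, D f⁆ - δ • ⁅f, D e⁆ := by
  simpa only [t.lie_e_f] using hD e f

theorem smul_lie_e_lie_h_deltaDer_f (hD : D ∈ deltaDer K L V δ) :
    δ • ⁅e, ⁅h, D f⁆⁆ = δ • ⁅e, ⁅f, D h⁆⁆ - (2 : K) • ⁅e, D f⁆ := by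
  simpa only [lie_smul, lie_sub] using congr_arg (⁅e, ·⁆) (t.smul_lie_h_deltaDer_f hD)

theorem smul_lie_f_lie_h_deltaDer_e (hD : D ∈ deltaDer K L V δ) :
    δ • ⁅f, ⁅h, D e⁆⁆ = (2 : K) • ⁅f, D e⁆ + δ • ⁅f, ⁅e, D h⁆⁆ := by
  simpa only [lie_smul, lie_add] using congr_arg (⁅f, ·⁆) (t.smul_lie_h_deltaDer_e hD)

theorem lie_h_deltaDer_h (hD : D ∈ deltaDer K L V δ) (hδ : δ ≠ 1) :
    ⁅h, D h⁆ = -(2 : K) • (⁅e, D f⁆ + ⁅f, D e⁆) := by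
  have hc : ⁅h, D h⁆ = δ • ⁅h, ⁅e, D f⁆⁆ - δ • ⁅h, ⁅f, D e⁆⁆ := by
    conv_lhs => rw [t.deltaDer_h_eq hD]
    rw [lie_sub, lie_smul, lie_smul]
  have key : (1 - δ) • (⁅h, D h⁆ + (2 : K) • (⁅e, D f⁆ + ⁅f, D e⁆)) = 0 := by
    linear_combination (norm := module) hc + δ • t.lie_h_lie_e (D f) - δ • t.lie_h_lie_f (D e) +
      t.smul_lie_e_lie_h_deltaDer_f hD - t.smul_lie_f_lie_h_deltaDer_e hD -
      δ • t.lie_h_eq_lie_e_lie_f_sub (D h)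
  rw [smul_eq_zero, or_iff_right (sub_ne_zero.mpr hδ.symm)] at key
  rw [neg_smul, eq_neg_iff_add_eq_zero, key]

variable {κ : K} (hΩ : sl2Casimir K V h e f = κ • 1) (hδ : δ ≠ 1)
  (hκ : κ * δ ^ 2 + 4 * δ - 4 ≠ 0)
include hΩ hδ hκ

theorem deltaDer_h_eq_zero (hD : D ∈ deltaDer K L V δ) : D h = 0 := by
  have hc := t.lie_h_deltaDer_h hD hδ
  have hhc : ⁅h, ⁅h, D h⁆⁆ = -(2 : K) • (⁅h, ⁅e, D f⁆⁆ + ⁅h, ⁅f, D e⁆⁆) := by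
    rw [hc, lie_smul, lie_add]
  have key : (κ * δ ^ 2 + 4 * δ - 4) • D h = 0 := by
    linear_combination (norm := module) -(δ ^ 2) • sl2Casimir_apply_of_eq_smul hΩ (D h) -
      (2 * δ) • t.smul_lie_e_lie_h_deltaDer_f hD - (2 * δ ^ 2) • t.lie_h_lie_e (D f) -
      (2 * δ) • t.smul_lie_f_lie_h_deltaDer_e hD - (2 * δ ^ 2) • t.lie_h_lie_f (D e) +
      δ ^ 2 • hhc - (4 * (1 - δ)) • t.deltaDer_h_eq hD
  exact (smul_eq_zero.mp key).resolve_left hκ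

theorem deltaDer_e_eq_zero (hD : D ∈ deltaDer K L V δ) : D e = 0 := by
  have hc := t.deltaDer_h_eq_zero hΩ hδ hκ hD
  have hha : δ • ⁅h, D e⁆ = (2 : K) • D e := by
    simpa [hc] using t.smul_lie_h_deltaDer_e hD
  have hhha : δ • ⁅h, ⁅h, D e⁆⁆ = (2 : K) • ⁅h, D e⁆ := by
    rw [← lie_smul, hha, lie_smul]
  have hfa : (4 * δ) • ⁅f, D e⁆ = 0 := by
    have h1 := t.lie_h_deltaDer_h hD hδ
    have h2 := t.deltaDer_h_eq hD
    rw [hc, lie_zero] at h1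
    rw [hc] at h2
    linear_combination (norm := module) δ • h1 + (2 : K) • h2
  have hefa : (4 * δ) • ⁅e, ⁅f, D e⁆⁆ = 0 := by
    rw [← lie_smul, hfa, lie_zero]
  have key : (κ * δ ^ 2 + 4 * δ - 4) • D e = 0 := by
    linear_combination (norm := module) -(δ ^ 2) • sl2Casimir_apply_of_eq_smul hΩ (D e) +
      (2 * δ ^ 2) • t.lie_h_eq_lie_e_lie_f_sub (D e) + δ • hefa + (2 - 2 * δ) • hha + δ • hhha
  exact (smul_eq_zero.mp key).resolve_left hκ

theorem deltaDer_f_eq_zero (hD : D ∈ deltaDer K L V δ) : D f = 0 := by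
  simpa using t.symm.deltaDer_e_eq_zero (by rw [sl2Casimir_neg_swap, hΩ]) hδ hκ hD

theorem deltaDer_eq_bot (hS : span K {e, f, h} = ⊤) : deltaDer K L V δ = ⊥ := by
  refine eq_bot_iff.mpr fun D hD => (mem_bot K).mpr (LinearMap.ext_on hS ?_)
  rintro x (rfl | rfl | rfl)
  exacts [t.deltaDer_e_eq_zero hΩ hδ hκ hD, t.deltaDer_f_eq_zero hΩ hδ hκ hD,
    t.deltaDer_h_eq_zero hΩ hδ hκ hD]

end IsSl2Triple

end

namespace LieAlgebra.SpecialLinear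

variable (K : Type*) [Field K]

def sl2E : sl (Fin 2) K := single 0 1 (by decide) 1

def sl2F : sl (Fin 2) K := single 1 0 (by decide) 1

def sl2H : sl (Fin 2) K := singleSubSingle 0 1 1

theorem isSl2Triple_sl2 : IsSl2Triple (sl2H K) (sl2E K) (sl2F K) where
  h_ne_zero h := by simpa [sl2H] using congr_arg (fun x : sl (Fin 2) K => x.val 0 0) h
  lie_e_f := by
    ext i j; fin_cases i <;> fin_cases j <;> simp [sl2E, sl2F, sl2H, Ring.lie_def]
  lie_h_e_nsmul := by
    ext i j; fin_cases i <;> fin_cases j <;> norm_num [sl2E, sl2H, Ring.lie_def, Matrix.mul_apply]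
  lie_h_f_nsmul := by
    ext i j; fin_cases i <;> fin_cases j <;> norm_num [sl2F, sl2H, Ring.lie_def, Matrix.mul_apply]

theorem span_sl2_eq_top : span K {sl2E K, sl2F K, sl2H K} = ⊤ := by
  refine eq_top_iff.mpr fun x _ => mem_span_triple.mpr ⟨x.val 0 1, x.val 1 0, x.val 0 0, ?_⟩
  have htr : Matrix.trace x.val = 0 := x.2
  rw [Matrix.trace_fin_two] at htr
  ext i j; fin_cases i <;> fin_cases j <;> simp [sl2E, sl2F, sl2H]
  linear_combination -htr

end LieAlgebra.SpecialLinear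

theorem deltaDer_sl2_eq_bot_general
    (K : Type*) [Field K] [IsAlgClosed K] [CharZero K]
    (n : ℕ)
    (V : Type*) [AddCommGroup V] [Module K V]
    [LieRingModule (LieAlgebra.SpecialLinear.sl (Fin 2) K) V]
    [LieModule K (LieAlgebra.SpecialLinear.sl (Fin 2) K) V]
    [LieModule.IsIrreducible K (LieAlgebra.SpecialLinear.sl (Fin 2) K) V]
    (hdim : Module.finrank K V = n + 1)
    (δ : K) (h1 : δ ≠ 1) (h2 : δ ≠ -2 / (n : K)) (h3 : δ ≠ 2 / ((n : K) + 2)) :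
    deltaDer K (LieAlgebra.SpecialLinear.sl (Fin 2) K) V δ = ⊥ := by
  have hδn : (n : K) * δ + 2 ≠ 0 := by
    rcases eq_or_ne (n : K) 0 with hn | hn
    · simp [hn]
    · contrapose! h2
      field_simp
      linear_combination h2
  have hδn' : ((n : K) + 2) * δ - 2 ≠ 0 := by
    have : (n : K) + 2 ≠ 0 := by norm_cast
    contrapose! h3
    field_simp
    linear_combination h3
  have t := LieAlgebra.SpecialLinear.isSl2Triple_sl2 K
  have hS := LieAlgebra.SpecialLinear.span_sl2_eq_top K
  refine t.deltaDer_eq_bot (t.sl2Casimir_eq_smul_of_finrank_eq hS hdim) h1 ?_ hS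
  rw [show (n : K) * (n + 2) * δ ^ 2 + 4 * δ - 4 = (n * δ + 2) * ((n + 2) * δ - 2) by ring]
  exact mul_ne_zero hδn hδn'

/-- for an irreducible `(n+1)`-dimensional module `V` over `sl(2,K)` (`K`
algebraically closed of characteristic zero, `n ≥ 1`), if `δ ≠ 1`, `δ ≠ -2/n` and
`δ ≠ 2/(n+2)`, then every `δ`-derivation of `sl(2,K)` with values in `V` is zero. -/
theorem deltaDer_sl2_eq_bot
    (K : Type*) [Field K] [IsAlgClosed K] [CharZero K]
    (n : ℕ) (hn : 1 ≤ n)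
    (V : Type*) [AddCommGroup V] [Module K V]
    [LieRingModule (LieAlgebra.SpecialLinear.sl (Fin 2) K) V]
    [LieModule K (LieAlgebra.SpecialLinear.sl (Fin 2) K) V]
    [LieModule.IsIrreducible K (LieAlgebra.SpecialLinear.sl (Fin 2) K) V]
    (hdim : Module.finrank K V = n + 1)
    (δ : K) (h1 : δ ≠ 1) (h2 : δ ≠ -2 / (n : K)) (h3 : δ ≠ 2 / ((n : K) + 2)) :
    deltaDer K (LieAlgebra.SpecialLinear.sl (Fin 2) K) V δ = ⊥ :=
  deltaDer_sl2_eq_bot_general K n V hdim δ h1 h2 h3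
end
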